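/- arXiv:1810.05693 — 11 statements merged into one kernel-verified Lean document; each statement's English description precedes it below -/
import Mathlib

section
/- Let 0 < α < β and let f be a nonnegative measurable function on (0,∞) with P_{α,β}(f) < ∞. Then for the even extension f̄ of f one has R_{α,β}(f̄) ≤ 2^{1/α} · P_{α,β}(f). -/
open MeasureTheory Set

/-- The `p`-mean of `f` over the interval `(a, b)`:
`M_{(a,b),p}(f) = ((1/(b-a)) ∫_a^b f(x)^p dx)^{1/p}`. -/
noncomputable def intervalMean (p a b : ℝ) (f : ℝ → ℝ) : ℝ :=
  ((b - a)⁻¹ * ∫ x in a..b, f x ^ p) ^ (1 / p)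

/-- The set of ratios `M_{I,β}(f)/M_{I,α}(f)` over bounded intervals `I ⊂ (0,∞)`;
its supremum is `P_{α,β}(f)`. -/
def ratioSetPos (α β : ℝ) (f : ℝ → ℝ) : Set ℝ :=
  {r | ∃ a b : ℝ, 0 ≤ a ∧ a < b ∧ r = intervalMean β a b f / intervalMean α a b f}

/-- The set of ratios `M_{I,β}(g)/M_{I,α}(g)` over bounded intervals `I ⊂ ℝ`;
its supremum is `R_{α,β}(g)`. -/
def ratioSetAll (α β : ℝ) (g : ℝ → ℝ) : Set ℝ :=
  {r | ∃ a b : ℝ, a < b ∧ r = intervalMean β a b g / intervalMean α a b g}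

private lemma ae_ne_zero : ∀ᵐ x : ℝ, x ≠ (0:ℝ) := by
  rw [MeasureTheory.ae_iff]
  simp only [not_ne_iff, setOf_eq_eq_singleton]
  exact measure_singleton 0

private lemma mean_reflect (p a b : ℝ) (g : ℝ → ℝ) :
    intervalMean p a b (fun x => g |x|) = intervalMean p (-b) (-a) (fun x => g |x|) := by
  unfold intervalMean
  have h1 : (∫ x in a..b, g |x| ^ p) = ∫ x in a..b, g |(-x)| ^ p := by
    apply intervalIntegral.integral_congr
    intro x _
    show g |x| ^ p = g |(-x)| ^ p
    rw [abs_neg]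
  rw [h1, intervalIntegral.integral_comp_neg (a := a) (b := b) (f := fun x => g |x| ^ p)]
  ring_nf

private lemma mean_pos_eq (p a b : ℝ) (ha : 0 ≤ a) (hab : a ≤ b) (g : ℝ → ℝ) :
    intervalMean p a b (fun x => g |x|) = intervalMean p a b g := by
  unfold intervalMean
  congr 2
  apply intervalIntegral.integral_congr
  intro x hx
  rw [uIcc_of_le hab] at hx
  show g |x| ^ p = g x ^ p
  rw [abs_of_nonneg (ha.trans hx.1)]

private lemma alg_step {α β t u v : ℝ} (hα : 0 < α) (hαβ : α < β)
    (ht : 0 < t) (h2t : 1 ≤ 2 * t) (hu : 0 < u) (hv : 0 ≤ v) :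
    ((2 * t) * v) ^ ((1:ℝ)/β) / (t * u) ^ ((1:ℝ)/α) ≤
      2 ^ ((1:ℝ)/α) * (v ^ ((1:ℝ)/β) / u ^ ((1:ℝ)/α)) := by
  have hβ : 0 < β := hα.trans hαβ
  rw [Real.mul_rpow (by positivity) hv, Real.mul_rpow ht.le hu.le]
  have hexp : (2 * t) ^ ((1:ℝ)/β) ≤ (2 * t) ^ ((1:ℝ)/α) :=
    Real.rpow_le_rpow_of_exponent_le h2t
      (by rw [div_le_div_iff₀ hβ hα]; nlinarith)
  have h2a : (2 * t) ^ ((1:ℝ)/α) = 2 ^ ((1:ℝ)/α) * t ^ ((1:ℝ)/α) :=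
    Real.mul_rpow (by norm_num) ht.le
  calc (2 * t) ^ ((1:ℝ)/β) * v ^ ((1:ℝ)/β) / (t ^ ((1:ℝ)/α) * u ^ ((1:ℝ)/α))
      ≤ (2 * t) ^ ((1:ℝ)/α) * v ^ ((1:ℝ)/β) / (t ^ ((1:ℝ)/α) * u ^ ((1:ℝ)/α)) := by
        apply div_le_div_of_nonneg_right ?_ (by positivity)
        exact mul_le_mul_of_nonneg_right hexp (Real.rpow_nonneg hv _)
    _ = 2 ^ ((1:ℝ)/α) * (v ^ ((1:ℝ)/β) / u ^ ((1:ℝ)/α)) := by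
        rw [h2a]
        have h1 : t ^ ((1:ℝ)/α) ≠ 0 := by positivity
        have h2 : u ^ ((1:ℝ)/α) ≠ 0 := by positivity
        field_simp

/-- If `0 < α < β` and `f` is a nonnegative measurable function on `(0,∞)` with
`P_{α,β}(f) < ∞`, then the even extension `f̄(x) = f(|x|)` satisfies
`R_{α,β}(f̄) ≤ 2^{1/α} · P_{α,β}(f)`. -/
theorem evenExtension_bound_of_pos_exponents
    (α β : ℝ) (hα : 0 < α) (hαβ : α < β) (f : ℝ → ℝ)
    (hmeas : Measurable f) (hnonneg : ∀ x > (0 : ℝ), 0 ≤ f x)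
    (hP : BddAbove (ratioSetPos α β f)) :
    sSup (ratioSetAll α β (fun x => f |x|)) ≤
      (2 : ℝ) ^ (1 / α) * sSup (ratioSetPos α β f) := by
  have hβ : 0 < β := hα.trans hαβ
  set fb : ℝ → ℝ := fun x => f |x| with hfb
  set S := sSup (ratioSetPos α β f) with hSdef
  -- a.e. nonnegativity of fb ^ p
  have hae : ∀ p : ℝ, ∀ᵐ x : ℝ, 0 ≤ fb x ^ p := by
    intro p
    filter_upwards [ae_ne_zero] with x hx
    exact Real.rpow_nonneg (hnonneg |x| (abs_pos.mpr hx)) p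
  -- nonnegativity of means of fb
  have hmean_nonneg : ∀ p a b : ℝ, a ≤ b → 0 ≤ intervalMean p a b fb := by
    intro p a b hab
    exact Real.rpow_nonneg (mul_nonneg (inv_nonneg.2 (sub_nonneg.2 hab))
      (intervalIntegral.integral_nonneg_of_ae hab (hae p))) _
  -- membership bound for nonnegative intervals
  have hmem : ∀ a b : ℝ, 0 ≤ a → a < b →
      intervalMean β a b fb / intervalMean α a b fb ≤ S := by
    intro a b ha hab
    apply le_csSup hP
    exact ⟨a, b, ha, hab, by
      rw [← mean_pos_eq β a b ha hab.le f, ← mean_pos_eq α a b ha hab.le f]⟩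
  have hS0 : (0:ℝ) ≤ S := by
    refine le_trans ?_ (hmem 0 1 le_rfl one_pos)
    exact div_nonneg (hmean_nonneg β 0 1 zero_le_one) (hmean_nonneg α 0 1 zero_le_one)
  have hcoef : (1:ℝ) ≤ 2 ^ (1/α) := Real.one_le_rpow one_le_two (by positivity)
  have hRHS0 : (0:ℝ) ≤ 2 ^ (1/α) * S := mul_nonneg (le_trans zero_le_one hcoef) hS0
  -- core case : a < 0 < b, -a ≤ b
  have core : ∀ a b : ℝ, a < 0 → 0 < b → -a ≤ b →
      intervalMean β a b fb / intervalMean α a b fb ≤ 2 ^ (1/α) * S := by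
    intro a b ha hb hmab
    by_cases hIβ : IntervalIntegrable (fun x => fb x ^ β) volume a b
    swap
    · have h0 : intervalMean β a b fb = 0 := by
        unfold intervalMean
        rw [intervalIntegral.integral_undef hIβ, mul_zero,
          Real.zero_rpow (by positivity : (1:ℝ)/β ≠ 0)]
      rw [h0, zero_div]; exact hRHS0
    by_cases hIα : IntervalIntegrable (fun x => fb x ^ α) volume a b
    swap
    · have h0 : intervalMean α a b fb = 0 := by
        unfold intervalMean
        rw [intervalIntegral.integral_undef hIα, mul_zero,
          Real.zero_rpow (by positivity : (1:ℝ)/α ≠ 0)]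
      rw [h0, div_zero]; exact hRHS0
    have hab' : a ≤ b := ha.le.trans hb.le
    have hsub2 : ∀ p : ℝ, IntervalIntegrable (fun x => fb x ^ p) volume a b →
        IntervalIntegrable (fun x => fb x ^ p) volume 0 b := by
      intro p hI
      exact hI.mono_set (by
        rw [uIcc_of_le hb.le, uIcc_of_le hab']
        exact Icc_subset_Icc ha.le le_rfl)
    have split : ∀ p : ℝ, IntervalIntegrable (fun x => fb x ^ p) volume a b →
        (∫ x in a..b, fb x ^ p) =
          (∫ x in (0:ℝ)..(-a), fb x ^ p) + ∫ x in (0:ℝ)..b, fb x ^ p := by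
      intro p hI
      have hsub1 : IntervalIntegrable (fun x => fb x ^ p) volume a 0 :=
        hI.mono_set (by
          rw [uIcc_of_le ha.le, uIcc_of_le hab']
          exact Icc_subset_Icc le_rfl hb.le)
      rw [← intervalIntegral.integral_add_adjacent_intervals hsub1 (hsub2 p hI)]
      congr 1
      have h1 : (∫ x in a..(0:ℝ), fb x ^ p) = ∫ x in a..(0:ℝ), fb (-x) ^ p := by
        apply intervalIntegral.integral_congr
        intro x _
        show fb x ^ p = fb (-x) ^ p
        simp only [hfb, abs_neg]
      rw [h1,
        intervalIntegral.integral_comp_neg (a := a) (b := (0:ℝ)) (f := fun x => fb x ^ p),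
        neg_zero]
    obtain ⟨A, B, hA, hB⟩ : ∃ A B : ℝ,
        A = (∫ x in (0:ℝ)..b, fb x ^ α) ∧ B = ∫ x in (0:ℝ)..b, fb x ^ β :=
      ⟨_, _, rfl, rfl⟩
    have hA0 : 0 ≤ A := hA ▸ intervalIntegral.integral_nonneg_of_ae hb.le (hae α)
    have hB0 : 0 ≤ B := hB ▸ intervalIntegral.integral_nonneg_of_ae hb.le (hae β)
    have hmonoA : (∫ x in (0:ℝ)..(-a), fb x ^ α) ≤ A := hA ▸
      intervalIntegral.integral_mono_interval le_rfl (by linarith) hmab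
        (MeasureTheory.ae_restrict_of_ae (hae α)) (hsub2 α hIα)
    have hmonoB : (∫ x in (0:ℝ)..(-a), fb x ^ β) ≤ B := hB ▸
      intervalIntegral.integral_mono_interval le_rfl (by linarith) hmab
        (MeasureTheory.ae_restrict_of_ae (hae β)) (hsub2 β hIβ)
    have hA'0 : 0 ≤ ∫ x in (0:ℝ)..(-a), fb x ^ α :=
      intervalIntegral.integral_nonneg_of_ae (by linarith) (hae α)
    have hB'0 : 0 ≤ ∫ x in (0:ℝ)..(-a), fb x ^ β :=
      intervalIntegral.integral_nonneg_of_ae (by linarith) (hae β)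
    rcases eq_or_lt_of_le hA0 with hAz | hApos
    · -- A = 0 forces denominator zero
      have hIa0 : (∫ x in a..b, fb x ^ α) = 0 := by
        rw [split α hIα]
        have h1 : (∫ x in (0:ℝ)..b, fb x ^ α) = 0 := by rw [← hA, ← hAz]
        linarith [hA ▸ hmonoA]
      have h0 : intervalMean α a b fb = 0 := by
        unfold intervalMean
        rw [hIa0, mul_zero, Real.zero_rpow (by positivity : (1:ℝ)/α ≠ 0)]
      rw [h0, div_zero]; exact hRHS0
    · have hba : (0:ℝ) < b - a := by linarith
      obtain ⟨t, u, v, ht, hu, hv⟩ : ∃ t u v : ℝ,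
          t = b / (b - a) ∧ u = b⁻¹ * A ∧ v = b⁻¹ * B := ⟨_, _, _, rfl, rfl, rfl⟩
      have htpos : 0 < t := ht ▸ div_pos hb hba
      have h2t : 1 ≤ 2 * t := by
        rw [ht, mul_div_assoc', le_div_iff₀ hba]; linarith
      have hupos : 0 < u := hu ▸ mul_pos (inv_pos.2 hb) hApos
      have hv0 : 0 ≤ v := hv ▸ mul_nonneg (inv_nonneg.2 hb.le) hB0
      have hbne : b ≠ 0 := hb.ne'
      have hbane : b - a ≠ 0 := hba.ne'
      have hIβle : (b - a)⁻¹ * (∫ x in a..b, fb x ^ β) ≤ (2 * t) * v := by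
        have h1 : (∫ x in a..b, fb x ^ β) ≤ 2 * B := by
          rw [split β hIβ]; linarith
        have h2 : (2 * t) * v = (b - a)⁻¹ * (2 * B) := by
          rw [ht, hv]; field_simp
        rw [h2]
        exact mul_le_mul_of_nonneg_left h1 (inv_nonneg.2 hba.le)
      have hIαge : t * u ≤ (b - a)⁻¹ * (∫ x in a..b, fb x ^ α) := by
        have h1 : A ≤ ∫ x in a..b, fb x ^ α := by
          rw [split α hIα]; linarith
        have h2 : t * u = (b - a)⁻¹ * A := by
          rw [ht, hu]; field_simp
        rw [h2]
        exact mul_le_mul_of_nonneg_left h1 (inv_nonneg.2 hba.le)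
      have htu : 0 < (t * u) ^ ((1:ℝ)/α) :=
        Real.rpow_pos_of_pos (mul_pos htpos hupos) _
      have hnum : intervalMean β a b fb ≤ ((2 * t) * v) ^ ((1:ℝ)/β) := by
        unfold intervalMean
        exact Real.rpow_le_rpow (mul_nonneg (inv_nonneg.2 hba.le)
          (intervalIntegral.integral_nonneg_of_ae hab' (hae β))) hIβle
          (le_of_lt (by positivity))
      have hden : (t * u) ^ ((1:ℝ)/α) ≤ intervalMean α a b fb :=
        Real.rpow_le_rpow (mul_nonneg htpos.le hupos.le) hIαge
          (le_of_lt (by positivity))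
      have step1 : intervalMean β a b fb / intervalMean α a b fb ≤
          ((2 * t) * v) ^ ((1:ℝ)/β) / (t * u) ^ ((1:ℝ)/α) :=
        div_le_div₀ (Real.rpow_nonneg (mul_nonneg (by linarith) hv0) _) hnum htu hden
      have step2 := alg_step hα hαβ htpos h2t hupos hv0
      have step3 : v ^ ((1:ℝ)/β) / u ^ ((1:ℝ)/α) ≤ S := by
        have hm := hmem 0 b le_rfl hb
        have heq : intervalMean β 0 b fb / intervalMean α 0 b fb
            = v ^ ((1:ℝ)/β) / u ^ ((1:ℝ)/α) := by
          unfold intervalMean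
          rw [sub_zero, ← hA, ← hB, ← hu, ← hv]
        rw [heq] at hm
        exact hm
      calc intervalMean β a b fb / intervalMean α a b fb
          ≤ ((2 * t) * v) ^ ((1:ℝ)/β) / (t * u) ^ ((1:ℝ)/α) := step1
        _ ≤ 2 ^ ((1:ℝ)/α) * (v ^ ((1:ℝ)/β) / u ^ ((1:ℝ)/α)) := step2
        _ ≤ 2 ^ ((1:ℝ)/α) * S :=
            mul_le_mul_of_nonneg_left step3 (le_trans zero_le_one hcoef)
  -- main argument
  apply Real.sSup_le _ hRHS0
  rintro r ⟨a, b, hab, rfl⟩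
  rcases le_or_gt 0 a with ha | ha
  · exact le_trans (hmem a b ha hab) (le_mul_of_one_le_left hS0 hcoef)
  · rcases le_or_gt b 0 with hb | hb
    · rw [hfb, mean_reflect β a b f, mean_reflect α a b f, ← hfb]
      exact le_trans (hmem (-b) (-a) (by linarith) (by linarith))
        (le_mul_of_one_le_left hS0 hcoef)
    · rcases le_or_gt (-a) b with h | h
      · exact core a b ha hb h
      · rw [hfb, mean_reflect β a b f, mean_reflect α a b f, ← hfb]
        exact core (-b) (-a) (by linarith) (by linarith) (by linarith)
end

section
/- Let α < β < 0 and let f be a nonnegative measurable function on (0,∞) with P_{α,β}(f) < ∞. Then for the even extension f̄ of f one has R_{α,β}(f̄) ≤ 2^{-1/β} · P_{α,β}(f). -/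
open MeasureTheory Set

/- ### Auxiliary lemmas -/

/-- Unfolding of the mean of the even extension. -/
lemma evenExt_mean_def (f : ℝ → ℝ) (p a b : ℝ) :
    intervalMean p a b (fun x => f |x|) =
      ((b - a)⁻¹ * ∫ x in a..b, f |x| ^ p) ^ (1 / p) := rfl

/-- Reflection identity for integrals of the even extension. -/
lemma evenExt_integral_refl (f : ℝ → ℝ) (p a b : ℝ) :
    (∫ x in a..b, f |x| ^ p) = ∫ x in (-b)..(-a), f |x| ^ p := by
  have h := intervalIntegral.integral_comp_neg (a := a) (b := b)
    (fun x => f |x| ^ p)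
  simp only [abs_neg] at h
  exact h

/-- Reflection identity for means of the even extension. -/
lemma evenExt_mean_refl (f : ℝ → ℝ) (p a b : ℝ) :
    intervalMean p a b (fun x => f |x|) = intervalMean p (-b) (-a) (fun x => f |x|) := by
  rw [evenExt_mean_def, evenExt_mean_def,
    show (-a) - (-b) = b - a by ring, evenExt_integral_refl]

/-- On `[0,∞)` the even extension agrees with `f` in the mean. -/
lemma evenExt_mean_nonneg_seg (f : ℝ → ℝ) (p a b : ℝ) (ha : 0 ≤ a) (hab : a ≤ b) :
    intervalMean p a b (fun x => f |x|) = intervalMean p a b f := by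
  rw [evenExt_mean_def]
  unfold intervalMean
  congr 2
  apply intervalIntegral.integral_congr
  intro x hx
  rw [Set.uIcc_of_le hab] at hx
  have hx0 : |x| = x := abs_of_nonneg (ha.trans hx.1)
  simp only [hx0]

/-- Nonnegativity of integrals of powers of the even extension over subintervals
of `[0,∞)`. -/
lemma evenExt_integral_nonneg (f : ℝ → ℝ) (hnonneg : ∀ x > (0:ℝ), 0 ≤ f x)
    (p c d : ℝ) (hc : 0 ≤ c) (hcd : c ≤ d) :
    0 ≤ ∫ x in c..d, f |x| ^ p := by
  apply intervalIntegral.integral_nonneg_of_ae_restrict hcd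
  have h1 : ∀ᵐ x ∂(volume.restrict (Icc c d)), x ∈ Icc c d :=
    ae_restrict_mem measurableSet_Icc
  have h0 : ∀ᵐ (x : ℝ), x ≠ 0 := by
    refine (MeasureTheory.ae_iff).2 ?_
    have : {x : ℝ | ¬ x ≠ 0} = {0} := by ext x; simp
    rw [this]
    exact measure_singleton 0
  have h2 : ∀ᵐ x ∂(volume.restrict (Icc c d)), x ≠ 0 := ae_restrict_of_ae h0
  filter_upwards [h1, h2] with x hx hx0
  have hxpos : 0 < x := lt_of_le_of_ne (hc.trans hx.1) (Ne.symm hx0)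
  rw [abs_of_pos hxpos]
  exact Real.rpow_nonneg (hnonneg x hxpos) p

/-- Nonnegativity of integrals of powers of `f` itself on subintervals of `[0,∞)`. -/
lemma pos_integral_nonneg (f : ℝ → ℝ) (hnonneg : ∀ x > (0:ℝ), 0 ≤ f x)
    (p c d : ℝ) (hc : 0 ≤ c) (hcd : c ≤ d) :
    0 ≤ ∫ x in c..d, f x ^ p := by
  apply intervalIntegral.integral_nonneg_of_ae_restrict hcd
  have h1 : ∀ᵐ x ∂(volume.restrict (Icc c d)), x ∈ Icc c d :=
    ae_restrict_mem measurableSet_Icc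
  have h0 : ∀ᵐ (x : ℝ), x ≠ 0 := by
    refine (MeasureTheory.ae_iff).2 ?_
    have : {x : ℝ | ¬ x ≠ 0} = {0} := by ext x; simp
    rw [this]
    exact measure_singleton 0
  have h2 : ∀ᵐ x ∂(volume.restrict (Icc c d)), x ≠ 0 := ae_restrict_of_ae h0
  filter_upwards [h1, h2] with x hx hx0
  have hxpos : 0 < x := lt_of_le_of_ne (hc.trans hx.1) (Ne.symm hx0)
  exact Real.rpow_nonneg (hnonneg x hxpos) p

/-- Means of `f` over subintervals of `[0,∞)` are nonnegative. -/
lemma pos_mean_nonneg (f : ℝ → ℝ) (hnonneg : ∀ x > (0:ℝ), 0 ≤ f x)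
    (p c d : ℝ) (hc : 0 ≤ c) (hcd : c < d) :
    0 ≤ intervalMean p c d f := by
  unfold intervalMean
  apply Real.rpow_nonneg
  have := pos_integral_nonneg f hnonneg p c d hc hcd.le
  have hd : (0:ℝ) ≤ (d - c)⁻¹ := inv_nonneg.2 (by linarith)
  exact mul_nonneg hd this

set_option maxHeartbeats 1000000 in
/-- Core estimate: interval straddling zero whose right half is at least as long. -/
lemma evenExt_core (α β : ℝ) (hαβ : α < β) (hβ : β < 0) (f : ℝ → ℝ)
    (hnonneg : ∀ x > (0:ℝ), 0 ≤ f x) (P : ℝ) (hP0 : 0 ≤ P)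
    (hPle : ∀ s t : ℝ, 0 ≤ s → s < t →
      intervalMean β s t f / intervalMean α s t f ≤ P)
    (a b : ℝ) (ha : a < 0) (hb : 0 < b) (hu : -a ≤ b) :
    intervalMean β a b (fun x => f |x|) / intervalMean α a b (fun x => f |x|) ≤
      (2 : ℝ) ^ (-(1 / β)) * P := by
  have hα : α < 0 := hαβ.trans hβ
  have hα0 : α ≠ 0 := ne_of_lt hα
  have hβ0 : β ≠ 0 := ne_of_lt hβ
  have h1α : 1 / α < 0 := div_neg_of_pos_of_neg one_pos hα
  have h1β : 1 / β < 0 := div_neg_of_pos_of_neg one_pos hβ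
  have hCP : 0 ≤ (2 : ℝ) ^ (-(1 / β)) * P :=
    mul_nonneg (Real.rpow_nonneg (by norm_num) _) hP0
  have hab' : a ≤ b := by linarith
  have hL : 0 < b - a := by linarith
  have hLne : b - a ≠ 0 := ne_of_gt hL
  have hbne : b ≠ 0 := ne_of_gt hb
  rw [evenExt_mean_def, evenExt_mean_def]
  -- integrability case splits
  by_cases hIβ : IntervalIntegrable (fun x => f |x| ^ β) volume a b
  swap
  · rw [intervalIntegral.integral_undef hIβ, mul_zero,
      Real.zero_rpow (one_div_ne_zero hβ0), zero_div]
    exact hCP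
  by_cases hIα : IntervalIntegrable (fun x => f |x| ^ α) volume a b
  swap
  · rw [intervalIntegral.integral_undef hIα, mul_zero,
      Real.zero_rpow (one_div_ne_zero hα0), div_zero]
    exact hCP
  -- notation
  set Aβ := ∫ x in a..(0:ℝ), f |x| ^ β with hAβdef
  set Bβ := ∫ x in (0:ℝ)..b, f |x| ^ β with hBβdef
  set Aα := ∫ x in a..(0:ℝ), f |x| ^ α with hAαdef
  set Bα := ∫ x in (0:ℝ)..b, f |x| ^ α with hBαdef
  have hmem0 : (0:ℝ) ∈ uIcc a b := by
    rw [Set.uIcc_of_le hab']; exact ⟨ha.le, hb.le⟩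
  have hsub1 : uIcc a (0:ℝ) ⊆ uIcc a b :=
    Set.uIcc_subset_uIcc Set.left_mem_uIcc hmem0
  have hsub2 : uIcc (0:ℝ) b ⊆ uIcc a b :=
    Set.uIcc_subset_uIcc hmem0 Set.right_mem_uIcc
  have hSβ : (∫ x in a..b, f |x| ^ β) = Aβ + Bβ :=
    (intervalIntegral.integral_add_adjacent_intervals
      (hIβ.mono_set hsub1) (hIβ.mono_set hsub2)).symm
  have hSα : (∫ x in a..b, f |x| ^ α) = Aα + Bα :=
    (intervalIntegral.integral_add_adjacent_intervals
      (hIα.mono_set hsub1) (hIα.mono_set hsub2)).symm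
  have hArefl : ∀ p : ℝ,
      (∫ x in a..(0:ℝ), f |x| ^ p) = ∫ x in (0:ℝ)..(-a), f |x| ^ p := by
    intro p
    rw [evenExt_integral_refl f p a 0, neg_zero]
  -- nonnegativity
  have hBβ0 : 0 ≤ Bβ := evenExt_integral_nonneg f hnonneg β 0 b le_rfl hb.le
  have hBα0 : 0 ≤ Bα := evenExt_integral_nonneg f hnonneg α 0 b le_rfl hb.le
  have hAβ0 : 0 ≤ Aβ := by
    rw [hAβdef, hArefl]
    exact evenExt_integral_nonneg f hnonneg β 0 (-a) le_rfl (by linarith)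
  have hAα0 : 0 ≤ Aα := by
    rw [hAαdef, hArefl]
    exact evenExt_integral_nonneg f hnonneg α 0 (-a) le_rfl (by linarith)
  -- A ≤ B
  have hAleB : ∀ p : ℝ, IntervalIntegrable (fun x => f |x| ^ p) volume 0 b →
      (∫ x in a..(0:ℝ), f |x| ^ p) ≤ ∫ x in (0:ℝ)..b, f |x| ^ p := by
    intro p hint
    rw [hArefl]
    have hmemu : (-a) ∈ uIcc (0:ℝ) b := by
      rw [Set.uIcc_of_le hb.le]; exact ⟨by linarith, hu⟩
    have hsplit := intervalIntegral.integral_add_adjacent_intervals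
      (hint.mono_set (Set.uIcc_subset_uIcc Set.left_mem_uIcc hmemu))
      (hint.mono_set (Set.uIcc_subset_uIcc hmemu Set.right_mem_uIcc))
    have htail : 0 ≤ ∫ x in (-a)..b, f |x| ^ p :=
      evenExt_integral_nonneg f hnonneg p (-a) b (by linarith) hu
    linarith [hsplit]
  have hAβB : Aβ ≤ Bβ := hAleB β (hIβ.mono_set hsub2)
  have hAαB : Aα ≤ Bα := hAleB α (hIα.mono_set hsub2)
  rw [hSβ, hSα]
  -- trivial cases: vanishing integrals
  rcases eq_or_lt_of_le (add_nonneg hAβ0 hBβ0) with hzβ | hposβ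
  · rw [← hzβ, mul_zero, Real.zero_rpow (one_div_ne_zero hβ0), zero_div]
    exact hCP
  rcases eq_or_lt_of_le (add_nonneg hAα0 hBα0) with hzα | hposα
  · rw [← hzα, mul_zero, Real.zero_rpow (one_div_ne_zero hα0), div_zero]
    exact hCP
  -- genuine case
  have hBβpos : 0 < Bβ := by linarith
  have hBαpos : 0 < Bα := by linarith
  have hLinv : (0:ℝ) < (b - a)⁻¹ := inv_pos.2 hL
  have hbinv : (0:ℝ) < b⁻¹ := inv_pos.2 hb
  set X := (b⁻¹ * Bβ) ^ (1/β) with hXdef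
  set Y := (b⁻¹ * Bα) ^ (1/α) with hYdef
  have hXpos : 0 < X := Real.rpow_pos_of_pos (mul_pos hbinv hBβpos) _
  have hYpos : 0 < Y := Real.rpow_pos_of_pos (mul_pos hbinv hBαpos) _
  set s := (b / (b - a)) ^ (1/β) with hsdef
  set t := (2 * b / (b - a)) ^ (1/α) with htdef
  have htpos : 0 < t := Real.rpow_pos_of_pos (div_pos (by linarith) hL) _
  have hspos : 0 < s := Real.rpow_pos_of_pos (div_pos hb hL) _
  -- (1) : Mβ(I) ≤ s * X
  have h1 : ((b - a)⁻¹ * (Aβ + Bβ)) ^ (1/β) ≤ s * X := by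
    have heq : (b / (b - a)) * (b⁻¹ * Bβ) = (b - a)⁻¹ * Bβ := by
      field_simp
    have hbase : (b / (b - a)) * (b⁻¹ * Bβ) ≤ (b - a)⁻¹ * (Aβ + Bβ) := by
      rw [heq]
      have h' : Bβ ≤ Aβ + Bβ := by linarith
      exact mul_le_mul_of_nonneg_left h' hLinv.le
    have hbpos : (0:ℝ) < (b / (b - a)) * (b⁻¹ * Bβ) :=
      mul_pos (div_pos hb hL) (mul_pos hbinv hBβpos)
    calc ((b - a)⁻¹ * (Aβ + Bβ)) ^ (1/β)
        ≤ ((b / (b - a)) * (b⁻¹ * Bβ)) ^ (1/β) :=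
          Real.rpow_le_rpow_of_nonpos hbpos hbase h1β.le
      _ = s * X := by rw [Real.mul_rpow (div_pos hb hL).le (mul_pos hbinv hBβpos).le]
  -- (2) : t * Y ≤ Mα(I)
  have h2 : t * Y ≤ ((b - a)⁻¹ * (Aα + Bα)) ^ (1/α) := by
    have heq : (2 * b / (b - a)) * (b⁻¹ * Bα) = (b - a)⁻¹ * (2 * Bα) := by
      field_simp
    have hbase : (b - a)⁻¹ * (Aα + Bα) ≤ (2 * b / (b - a)) * (b⁻¹ * Bα) := by
      rw [heq]
      have h' : Aα + Bα ≤ 2 * Bα := by linarith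
      exact mul_le_mul_of_nonneg_left h' hLinv.le
    have hpos : (0:ℝ) < (b - a)⁻¹ * (Aα + Bα) := mul_pos hLinv hposα
    calc t * Y = ((2 * b / (b - a)) * (b⁻¹ * Bα)) ^ (1/α) := by
          rw [Real.mul_rpow (div_pos (by linarith) hL).le (mul_pos hbinv hBαpos).le]
      _ ≤ ((b - a)⁻¹ * (Aα + Bα)) ^ (1/α) :=
          Real.rpow_le_rpow_of_nonpos hpos hbase h1α.le
  -- (3) : s ≤ 2^(-(1/β)) * t
  have h3 : s ≤ (2:ℝ) ^ (-(1/β)) * t := by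
    have h2bL : (1:ℝ) ≤ 2 * b / (b - a) := by
      rw [le_div_iff₀ hL]; linarith
    have hexp : 1 / β ≤ 1 / α := by
      have hd : 1 / α - 1 / β = (β - α) / (α * β) := by field_simp
      have h' : 0 ≤ (β - α) / (α * β) :=
        div_nonneg (by linarith) (mul_pos_of_neg_of_neg hα hβ).le
      rw [← hd] at h'
      linarith
    have hmono : (2 * b / (b - a)) ^ (1/β) ≤ (2 * b / (b - a)) ^ (1/α) :=
      Real.rpow_le_rpow_of_exponent_le h2bL hexp
    have hsplit : s = (2:ℝ) ^ (-(1/β)) * (2 * b / (b - a)) ^ (1/β) := by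
      rw [hsdef, show b / (b - a) = (2 * b / (b - a)) / 2 by ring,
        Real.div_rpow (div_pos (by linarith) hL).le (by norm_num),
        Real.rpow_neg (by norm_num)]
      ring
    rw [hsplit]
    exact mul_le_mul_of_nonneg_left hmono (Real.rpow_nonneg (by norm_num) _)
  -- combine
  have hstep : ((b - a)⁻¹ * (Aβ + Bβ)) ^ (1/β) / ((b - a)⁻¹ * (Aα + Bα)) ^ (1/α)
      ≤ (s * X) / (t * Y) :=
    div_le_div₀ (mul_pos hspos hXpos).le h1 (mul_pos htpos hYpos) h2
  have hstep2 : (s * X) / (t * Y) ≤ (2:ℝ) ^ (-(1/β)) * (X / Y) := by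
    have heq : (s * X) / (t * Y) = (s / t) * (X / Y) :=
      (div_mul_div_comm s t X Y).symm
    rw [heq]
    have hst : s / t ≤ (2:ℝ) ^ (-(1/β)) := (div_le_iff₀ htpos).2 h3
    exact mul_le_mul_of_nonneg_right hst (div_pos hXpos hYpos).le
  -- X / Y is a one-sided ratio
  have hmeanβ : intervalMean β 0 b f = X := by
    unfold intervalMean
    rw [hXdef, sub_zero]
    congr 2
    rw [hBβdef]
    apply intervalIntegral.integral_congr
    intro x hx
    rw [Set.uIcc_of_le hb.le] at hx
    simp only [abs_of_nonneg hx.1]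
  have hmeanα : intervalMean α 0 b f = Y := by
    unfold intervalMean
    rw [hYdef, sub_zero]
    congr 2
    rw [hBαdef]
    apply intervalIntegral.integral_congr
    intro x hx
    rw [Set.uIcc_of_le hb.le] at hx
    simp only [abs_of_nonneg hx.1]
  have hfinal : X / Y ≤ P := by
    rw [← hmeanβ, ← hmeanα]; exact hPle 0 b le_rfl hb
  calc ((b - a)⁻¹ * (Aβ + Bβ)) ^ (1/β) / ((b - a)⁻¹ * (Aα + Bα)) ^ (1/α)
      ≤ (2:ℝ) ^ (-(1/β)) * (X / Y) := le_trans hstep hstep2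
    _ ≤ (2:ℝ) ^ (-(1/β)) * P :=
        mul_le_mul_of_nonneg_left hfinal (Real.rpow_nonneg (by norm_num) _)

/-- If `α < β < 0` and `f` is a nonnegative measurable function on `(0,∞)` with
`P_{α,β}(f) < ∞`, then the even extension `f̄(x) = f(|x|)` satisfies
`R_{α,β}(f̄) ≤ 2^{-1/β} · P_{α,β}(f)`. -/
theorem evenExtension_bound_of_neg_exponents
    (α β : ℝ) (hαβ : α < β) (hβ : β < 0) (f : ℝ → ℝ)
    (hmeas : Measurable f) (hnonneg : ∀ x > (0 : ℝ), 0 ≤ f x)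
    (hP : BddAbove (ratioSetPos α β f)) :
    sSup (ratioSetAll α β (fun x => f |x|)) ≤
      (2 : ℝ) ^ (-(1 / β)) * sSup (ratioSetPos α β f) := by
  set P := sSup (ratioSetPos α β f) with hPdef
  have hβ0 : β ≠ 0 := ne_of_lt hβ
  have hPle : ∀ s t : ℝ, 0 ≤ s → s < t →
      intervalMean β s t f / intervalMean α s t f ≤ P := by
    intro s t hs hst
    exact le_csSup hP ⟨s, t, hs, hst, rfl⟩
  have hP0 : 0 ≤ P := by
    refine le_trans ?_ (hPle 0 1 le_rfl one_pos)
    exact div_nonneg (pos_mean_nonneg f hnonneg β 0 1 le_rfl one_pos)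
      (pos_mean_nonneg f hnonneg α 0 1 le_rfl one_pos)
  have hC1 : (1:ℝ) ≤ (2:ℝ) ^ (-(1/β)) := by
    have hexp : (0:ℝ) ≤ -(1/β) := by
      have : 1 / β < 0 := div_neg_of_pos_of_neg one_pos hβ
      linarith
    have := Real.rpow_le_rpow_of_exponent_le (one_le_two (α := ℝ)) hexp
    rwa [Real.rpow_zero] at this
  have hCP : P ≤ (2:ℝ) ^ (-(1/β)) * P := le_mul_of_one_le_left hP0 hC1
  apply Real.sSup_le
  · rintro r ⟨a, b, hab, rfl⟩
    rcases le_or_gt 0 a with hA | hA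
    · -- interval in [0,∞)
      rw [evenExt_mean_nonneg_seg f β a b hA hab.le,
        evenExt_mean_nonneg_seg f α a b hA hab.le]
      exact le_trans (hPle a b hA hab) hCP
    rcases le_or_gt b 0 with hB | hB
    · -- interval in (-∞,0]
      rw [evenExt_mean_refl f β a b, evenExt_mean_refl f α a b,
        evenExt_mean_nonneg_seg f β (-b) (-a) (by linarith) (by linarith),
        evenExt_mean_nonneg_seg f α (-b) (-a) (by linarith) (by linarith)]
      exact le_trans (hPle (-b) (-a) (by linarith) (by linarith)) hCP
    -- straddling interval
    rcases le_or_gt (-a) b with hU | hU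
    · exact evenExt_core α β hαβ hβ f hnonneg P hP0 hPle a b hA hB hU
    · rw [evenExt_mean_refl f β a b, evenExt_mean_refl f α a b]
      exact evenExt_core α β hαβ hβ f hnonneg P hP0 hPle (-b) (-a)
        (by linarith) (by linarith) (by linarith)
  · exact mul_nonneg (Real.rpow_nonneg (by norm_num) _) hP0
end

section
/- Let α < 0 < β and let f be a nonnegative measurable function on (0,∞) with P_{α,β}(f) < ∞. Then for the even extension f̄ of f one has R_{α,β}(f̄) ≤ 2^{1/β − 1/α} · P_{α,β}(f). -/
open MeasureTheory Set

/-!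
An interval inside `(0, ∞)` or `(-∞, 0)` sees the even extension exactly as `f` sees an interval
of `(0, ∞)`. An interval `(a, b)` with `a < 0 < b` folds onto `(0, c)`, `c = max (-a) b`, which is
at least half as long, so the average of `f̄ ^ p` over `(a, b)` is at most twice that of `f ^ p`
over `(0, c)`. Taking `1/p`-th powers, increasing for `p = β > 0` and decreasing for `p = α < 0`,
the factor `2` costs at most `2 ^ (1/β)` in the numerator and `2 ^ (-1/α)` in the denominator.
-/

section EvenExtension

variable {G : ℝ → ℝ} {a b : ℝ}

theorem eqOn_comp_abs_of_nonneg (ha : 0 ≤ a) (hb : 0 ≤ b) :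
    EqOn (fun x => G |x|) G (uIcc a b) := fun x hx => by
  simp only [abs_of_nonneg ((le_min ha hb).trans hx.1)]

theorem integral_comp_abs_of_nonneg (ha : 0 ≤ a) (hb : 0 ≤ b) :
    ∫ x in a..b, G |x| = ∫ x in a..b, G x :=
  intervalIntegral.integral_congr (eqOn_comp_abs_of_nonneg ha hb)

theorem integral_comp_abs_of_nonpos (ha : a ≤ 0) (hb : b ≤ 0) :
    ∫ x in a..b, G |x| = ∫ x in -b..-a, G x := by
  simpa only [abs_neg, integral_comp_abs_of_nonneg (neg_nonneg.2 hb) (neg_nonneg.2 ha)] using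
    intervalIntegral.integral_comp_neg (a := a) (b := b) fun x => G |x|

theorem IntervalIntegrable.of_comp_abs (h : IntervalIntegrable (fun x => G |x|) volume a b)
    (ha : 0 ≤ a) (hb : 0 ≤ b) : IntervalIntegrable G volume a b :=
  h.congr ((eqOn_comp_abs_of_nonneg ha hb).mono uIoc_subset_uIcc)

theorem integral_comp_abs_nonneg (hG : ∀ x > 0, 0 ≤ G x) (hab : a ≤ b) :
    0 ≤ ∫ x in a..b, G |x| := by
  refine intervalIntegral.integral_nonneg_of_ae_restrict hab (ae_restrict_of_ae ?_)
  filter_upwards [compl_mem_ae_iff.2 (Real.volume_singleton (a := 0))] with x hx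
  exact hG _ (abs_pos.2 hx)

theorem integral_comp_abs_le_two_mul (hG : ∀ x > 0, 0 ≤ G x) (ha : a ≤ 0) (hb : 0 ≤ b) :
    ∫ x in a..b, G |x| ≤ 2 * ∫ x in 0..max (-a) b, G x := by
  set c := max (-a) b
  have hc : 0 ≤ c := le_max_of_le_right hb
  by_cases hI : IntervalIntegrable (fun x => G |x|) volume a b
  swap
  · rw [intervalIntegral.integral_undef hI, ← integral_comp_abs_of_nonneg le_rfl hc]
    exact mul_nonneg zero_le_two (integral_comp_abs_nonneg hG hc)
  have hIneg : IntervalIntegrable (fun x => G |x|) volume a 0 :=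
    hI.mono_set (uIcc_subset_uIcc_left (by simp [mem_uIcc, ha, hb]))
  have hIpos : IntervalIntegrable (fun x => G |x|) volume 0 b :=
    hI.mono_set (uIcc_subset_uIcc_right (by simp [mem_uIcc, ha, hb]))
  have hIc : IntervalIntegrable G volume 0 c := by
    obtain h | h : c = -a ∨ c = b := max_choice (-a) b <;> rw [h]
    · refine IntervalIntegrable.of_comp_abs ?_ le_rfl (neg_nonneg.2 ha)
      simpa using ((IntervalIntegrable.iff_comp_neg (by simp)).1 hIneg).symm
    · exact hIpos.of_comp_abs le_rfl hb
  have hmono : ∀ d, 0 ≤ d → d ≤ c → ∫ x in 0..d, G x ≤ ∫ x in 0..c, G x := fun d hd hdc =>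
    intervalIntegral.integral_mono_interval le_rfl hd hdc
      (ae_restrict_of_forall_mem measurableSet_Ioc fun x hx => hG x hx.1) hIc
  rw [← intervalIntegral.integral_add_adjacent_intervals hIneg hIpos,
    integral_comp_abs_of_nonpos ha le_rfl, integral_comp_abs_of_nonneg le_rfl hb, neg_zero]
  linarith [hmono (-a) (neg_nonneg.2 ha) (le_max_left _ _), hmono b hb (le_max_right _ _)]

theorem average_comp_abs_le_two_mul (hG : ∀ x > 0, 0 ≤ G x) (ha : a < 0) (hb : 0 < b) :
    (b - a)⁻¹ * ∫ x in a..b, G |x| ≤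
      2 * ((max (-a) b)⁻¹ * ∫ x in 0..max (-a) b, G x) := by
  have hc : 0 < max (-a) b := lt_max_of_lt_right hb
  calc (b - a)⁻¹ * ∫ x in a..b, G |x|
      ≤ (max (-a) b)⁻¹ * ∫ x in a..b, G |x| := by
        gcongr
        · exact integral_comp_abs_nonneg hG (by linarith)
        · exact max_le (by linarith) (by linarith)
    _ ≤ (max (-a) b)⁻¹ * (2 * ∫ x in 0..max (-a) b, G x) := by
        gcongr
        exact integral_comp_abs_le_two_mul hG ha.le hb.le
    _ = 2 * ((max (-a) b)⁻¹ * ∫ x in 0..max (-a) b, G x) := by ring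

end EvenExtension

theorem rpow_div_rpow_le_of_le_mul {α β k x y u v : ℝ} (hα : α < 0) (hβ : 0 < β) (hk : 0 < k)
    (hx : 0 ≤ x) (hxu : x ≤ k * u) (hy : 0 ≤ y) (hyv : y ≤ k * v) :
    x ^ (1 / β) / y ^ (1 / α) ≤ k ^ (1 / β - 1 / α) * (u ^ (1 / β) / v ^ (1 / α)) := by
  have hu : 0 ≤ u := nonneg_of_mul_nonneg_right (hx.trans hxu) hk
  have hv : 0 ≤ v := nonneg_of_mul_nonneg_right (hy.trans hyv) hk
  rcases hy.eq_or_lt with rfl | hy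
  · rw [Real.zero_rpow (by simp [hα.ne]), div_zero]
    positivity
  have hnum : x ^ (1 / β) ≤ k ^ (1 / β) * u ^ (1 / β) := by
    rw [← Real.mul_rpow hk.le hu]
    exact Real.rpow_le_rpow hx hxu (by positivity)
  have hden : k ^ (1 / α) * v ^ (1 / α) ≤ y ^ (1 / α) := by
    rw [← Real.mul_rpow hk.le hv]
    exact Real.rpow_le_rpow_of_nonpos hy hyv (one_div_neg.2 hα).le
  have hv : 0 < v := pos_of_mul_pos_right (hy.trans_le hyv) hk.le
  calc x ^ (1 / β) / y ^ (1 / α)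
      ≤ (k ^ (1 / β) * u ^ (1 / β)) / (k ^ (1 / α) * v ^ (1 / α)) :=
        div_le_div₀ (by positivity) hnum (by positivity) hden
    _ = k ^ (1 / β - 1 / α) * (u ^ (1 / β) / v ^ (1 / α)) := by
        rw [Real.rpow_sub hk, div_mul_div_comm]

section IntervalMean

variable {f : ℝ → ℝ} {a b : ℝ}

theorem intervalMean_comp_abs_of_nonneg (p : ℝ) (ha : 0 ≤ a) (hb : 0 ≤ b) :
    intervalMean p a b (fun x => f |x|) = intervalMean p a b f := by
  simp only [intervalMean, integral_comp_abs_of_nonneg (G := fun x => f x ^ p) ha hb]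

theorem intervalMean_comp_abs_of_nonpos (p : ℝ) (ha : a ≤ 0) (hb : b ≤ 0) :
    intervalMean p a b (fun x => f |x|) = intervalMean p (-b) (-a) f := by
  simp only [intervalMean, integral_comp_abs_of_nonpos (G := fun x => f x ^ p) ha hb, neg_sub_neg]

theorem intervalMean_nonneg (hf : ∀ x > 0, 0 ≤ f x) (p : ℝ) (ha : 0 ≤ a) (hab : a ≤ b) :
    0 ≤ intervalMean p a b f := by
  have h := integral_comp_abs_nonneg (G := fun x => f x ^ p)
    (fun x hx => Real.rpow_nonneg (hf x hx) p) hab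
  simp only [integral_comp_abs_of_nonneg (G := fun x => f x ^ p) ha (ha.trans hab)] at h
  exact Real.rpow_nonneg (mul_nonneg (inv_nonneg.2 (sub_nonneg.2 hab)) h) _

theorem intervalMean_div_comp_abs_le {α β : ℝ} (hα : α < 0) (hβ : 0 < β)
    (hf : ∀ x > 0, 0 ≤ f x) (ha : a < 0) (hb : 0 < b) :
    intervalMean β a b (fun x => f |x|) / intervalMean α a b (fun x => f |x|) ≤
      2 ^ (1 / β - 1 / α) *
        (intervalMean β 0 (max (-a) b) f / intervalMean α 0 (max (-a) b) f) := by
  have hfp (p : ℝ) : ∀ x > 0, 0 ≤ f x ^ p := fun x hx => Real.rpow_nonneg (hf x hx) p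
  have hmean (p : ℝ) : 0 ≤ (b - a)⁻¹ * ∫ x in a..b, f |x| ^ p :=
    mul_nonneg (inv_nonneg.2 (by linarith)) (integral_comp_abs_nonneg (hfp p) (by linarith))
  simp only [intervalMean, sub_zero]
  exact rpow_div_rpow_le_of_le_mul hα hβ two_pos (hmean β)
    (average_comp_abs_le_two_mul (hfp β) ha hb) (hmean α)
    (average_comp_abs_le_two_mul (hfp α) ha hb)

end IntervalMean

theorem evenExtension_bound_of_mixed_exponents_general
    (α β : ℝ) (hα : α < 0) (hβ : 0 < β) (f : ℝ → ℝ)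
    (hnonneg : ∀ x > (0 : ℝ), 0 ≤ f x)
    (hP : BddAbove (ratioSetPos α β f)) :
    sSup (ratioSetAll α β (fun x => f |x|)) ≤
      (2 : ℝ) ^ (1 / β - 1 / α) * sSup (ratioSetPos α β f) := by
  have hk : (1 : ℝ) ≤ 2 ^ (1 / β - 1 / α) :=
    Real.one_le_rpow one_le_two (by linarith [one_div_neg.2 hα, one_div_pos.2 hβ])
  have hP0 : 0 ≤ sSup (ratioSetPos α β f) :=
    le_csSup_of_le hP ⟨0, 1, le_rfl, one_pos, rfl⟩ <| div_nonneg
      (intervalMean_nonneg hnonneg β le_rfl zero_le_one)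
      (intervalMean_nonneg hnonneg α le_rfl zero_le_one)
  have hpos (u v : ℝ) (hu : 0 ≤ u) (huv : u < v) :
      intervalMean β u v f / intervalMean α u v f ≤ sSup (ratioSetPos α β f) :=
    le_csSup hP ⟨u, v, hu, huv, rfl⟩
  refine csSup_le ⟨_, 0, 1, one_pos, rfl⟩ ?_
  rintro _ ⟨a, b, hab, rfl⟩
  rcases le_or_gt 0 a with ha | ha
  · rw [intervalMean_comp_abs_of_nonneg β ha (ha.trans hab.le),
      intervalMean_comp_abs_of_nonneg α ha (ha.trans hab.le)]
    exact (hpos a b ha hab).trans (le_mul_of_one_le_left hP0 hk)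
  rcases le_or_gt b 0 with hb | hb
  · rw [intervalMean_comp_abs_of_nonpos β ha.le hb, intervalMean_comp_abs_of_nonpos α ha.le hb]
    exact (hpos (-b) (-a) (by linarith) (by linarith)).trans (le_mul_of_one_le_left hP0 hk)
  exact (intervalMean_div_comp_abs_le hα hβ hnonneg ha hb).trans <|
    mul_le_mul_of_nonneg_left (hpos 0 _ le_rfl (lt_max_of_lt_right hb)) (by positivity)

/-- If `α < 0 < β` and `f` is a nonnegative measurable function on `(0,∞)` with
`P_{α,β}(f) < ∞`, then the even extension `f̄(x) = f(|x|)` satisfies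
`R_{α,β}(f̄) ≤ 2^{1/β - 1/α} · P_{α,β}(f)`. -/
theorem evenExtension_bound_of_mixed_exponents
    (α β : ℝ) (hα : α < 0) (hβ : 0 < β) (f : ℝ → ℝ)
    (hmeas : Measurable f) (hnonneg : ∀ x > (0 : ℝ), 0 ≤ f x)
    (hP : BddAbove (ratioSetPos α β f)) :
    sSup (ratioSetAll α β (fun x => f |x|)) ≤
      (2 : ℝ) ^ (1 / β - 1 / α) * sSup (ratioSetPos α β f) :=
  evenExtension_bound_of_mixed_exponents_general α β hα hβ f hnonneg hP
end

section
/- Let α < β with αβ ≠ 0 and let γ ∈ ℝ satisfy αγ > −1 and βγ > −1. Then for the function f̄(x) = |x|^γ on ℝ, the supremum over all bounded intervals I ⊂ ℝ of M_{I,β}(f̄)/M_{I,α}(f̄) equals the supremum over ε ∈ [0,1] of M_{(−ε,1),β}(f̄)/M_{(−ε,1),α}(f̄). -/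
open MeasureTheory Set

/-! The means of `|x|^γ` are invariant under `x ↦ -x` and scale by `t^γ` under `x ↦ t x`, so every
interval can be normalised to `(c, 1)` with `-1 ≤ c < 1`; for `c ≤ 0` it is one of the intervals
`(-ε, 1)`. For `0 < c < 1`, `M_{(c,1),p}^p = (1 - c^{pγ+1}) / ((pγ+1)(1-c))`, so
`log (M_{(c,1),p} / M_{(0,1),p})` is the secant slope at `0` of the concave function
`p ↦ log (1 - c^{pγ+1})`. That slope is antitone in `p`, hence the ratio over `(c, 1)` is at most
the ratio over `(0, 1)`. -/

open Real

lemma ConcaveOn.log {s : Set ℝ} {h : ℝ → ℝ} (hh : ConcaveOn ℝ s h) (hpos : ∀ x ∈ s, 0 < h x) :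
    ConcaveOn ℝ s fun x => Real.log (h x) := by
  refine ⟨hh.1, fun x hx y hy a b ha hb hab => ?_⟩
  calc a • Real.log (h x) + b • Real.log (h y) ≤ Real.log (a • h x + b • h y) :=
        strictConcaveOn_log_Ioi.concaveOn.2 (hpos x hx) (hpos y hy) ha hb hab
    _ ≤ Real.log (h (a • x + b • y)) :=
        log_le_log (convex_Ioi (0 : ℝ) (hpos x hx) (hpos y hy) ha hb hab) (hh.2 hx hy ha hb hab)

lemma concaveOn_log_one_sub_rpow_mul_add_one {c : ℝ} (hc0 : 0 < c) (hc1 : c < 1) (γ : ℝ) :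
    ConcaveOn ℝ {p | -1 < p * γ} fun p => log (1 - c ^ (p * γ + 1)) := by
  have hconvex : Convex ℝ {p : ℝ | -1 < p * γ} :=
    convex_halfSpace_gt (LinearMap.mulRight ℝ γ).isLinear (-1)
  have hrw : (fun p : ℝ => c ^ (p * γ + 1)) = fun p => c • (c ^ γ) ^ p := by
    funext p
    rw [rpow_add hc0, rpow_one, mul_comm p, rpow_mul hc0.le, smul_eq_mul, mul_comm]
  have hconv : ConvexOn ℝ {p : ℝ | -1 < p * γ} fun p => c ^ (p * γ + 1) := by
    rw [hrw]
    exact ((convexOn_rpow_left (rpow_pos_of_pos hc0 γ)).subset (subset_univ _) hconvex).smul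
      hc0.le
  exact ((concaveOn_const 1 hconvex).sub hconv).log fun p hp =>
    sub_pos.2 (rpow_lt_one hc0.le hc1 (by linarith [hp.out]))

lemma intervalMean_comp_neg (p a b : ℝ) (f : ℝ → ℝ) :
    intervalMean p (-b) (-a) f = intervalMean p a b fun x => f (-x) := by
  rw [intervalMean, intervalMean, intervalIntegral.integral_comp_neg fun x => f x ^ p, neg_sub_neg]

lemma intervalMean_comp_mul_left (p : ℝ) {t : ℝ} (ht : t ≠ 0) (a b : ℝ) (f : ℝ → ℝ) :
    intervalMean p (t * a) (t * b) f = intervalMean p a b fun x => f (t * x) := by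
  rw [intervalMean, intervalMean, intervalIntegral.integral_comp_mul_left (fun x => f x ^ p) ht,
    smul_eq_mul, ← mul_sub, mul_inv, mul_assoc, mul_left_comm]

lemma intervalMean_const_mul {p k a b : ℝ} {f : ℝ → ℝ} (hp : p ≠ 0) (hk : 0 ≤ k)
    (hf : ∀ x, 0 ≤ f x) (hab : a ≤ b) :
    intervalMean p a b (fun x => k * f x) = k * intervalMean p a b f := by
  have hint : 0 ≤ (b - a)⁻¹ * ∫ x in a..b, f x ^ p :=
    mul_nonneg (inv_nonneg.2 (sub_nonneg.2 hab))
      (intervalIntegral.integral_nonneg hab fun x _ => rpow_nonneg (hf x) p)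
  simp only [intervalMean, mul_rpow hk (hf _), intervalIntegral.integral_const_mul]
  rw [mul_left_comm, mul_rpow (rpow_nonneg hk p) hint, ← rpow_mul hk, mul_one_div_cancel hp,
    rpow_one]

lemma intervalMean_abs_rpow_eq_rpow_mul {p γ a b : ℝ} (hp : p ≠ 0) (hb : 0 < b) (hab : a ≤ b) :
    intervalMean p a b (fun x => |x| ^ γ) =
      b ^ γ * intervalMean p (a / b) 1 (fun x => |x| ^ γ) := by
  have hscale : (fun x => |b * x| ^ γ) = fun x => b ^ γ * |x| ^ γ := by
    funext x
    rw [abs_mul, abs_of_pos hb, mul_rpow hb.le (abs_nonneg x)]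
  have hab' : intervalMean p a b (fun x => |x| ^ γ) =
      intervalMean p (b * (a / b)) (b * 1) (fun x => |x| ^ γ) := by
    rw [mul_div_cancel₀ a hb.ne', mul_one]
  rw [hab', intervalMean_comp_mul_left p hb.ne', hscale, intervalMean_const_mul hp
    (rpow_nonneg hb.le γ) (fun x => rpow_nonneg (abs_nonneg x) γ) ((div_le_one hb).2 hab)]

lemma integral_abs_rpow_of_nonneg {r a b : ℝ} (hr : -1 < r) (ha : 0 ≤ a) (hb : 0 ≤ b) :
    ∫ x in a..b, |x| ^ r = (b ^ (r + 1) - a ^ (r + 1)) / (r + 1) := by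
  rw [← integral_rpow (Or.inl hr)]
  refine intervalIntegral.integral_congr fun x hx => ?_
  rw [abs_of_nonneg (le_trans (le_min ha hb) hx.1)]

lemma intervalMean_abs_rpow_of_nonneg {p γ c : ℝ} (hw : -1 < p * γ) (hc0 : 0 ≤ c) :
    intervalMean p c 1 (fun x => |x| ^ γ) =
      ((1 - c ^ (p * γ + 1)) / ((p * γ + 1) * (1 - c))) ^ (1 / p) := by
  have habs : (fun x : ℝ => (|x| ^ γ) ^ p) = fun x => |x| ^ (p * γ) := by
    funext x
    rw [← rpow_mul (abs_nonneg x), mul_comm]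
  rw [intervalMean, habs, integral_abs_rpow_of_nonneg hw hc0 zero_le_one, one_rpow, inv_mul_eq_div,
    div_div]

lemma intervalMean_abs_rpow_pos {p γ c : ℝ} (hw : -1 < p * γ) (hc0 : 0 ≤ c) (hc1 : c < 1) :
    0 < intervalMean p c 1 (fun x => |x| ^ γ) := by
  have hc : c ^ (p * γ + 1) < 1 := rpow_lt_one hc0 hc1 (by linarith)
  rw [intervalMean_abs_rpow_of_nonneg hw hc0]
  exact rpow_pos_of_pos (div_pos (by linarith) (mul_pos (by linarith) (by linarith))) _

lemma log_intervalMean_abs_rpow {p γ c : ℝ} (hw : -1 < p * γ) (hc0 : 0 ≤ c) (hc1 : c < 1) :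
    log (intervalMean p c 1 (fun x => |x| ^ γ)) =
      (log (1 - c ^ (p * γ + 1)) - log (p * γ + 1) - log (1 - c)) / p := by
  have hc : c ^ (p * γ + 1) < 1 := rpow_lt_one hc0 hc1 (by linarith)
  rw [intervalMean_abs_rpow_of_nonneg hw hc0,
    log_rpow (div_pos (by linarith) (mul_pos (by linarith) (by linarith))),
    log_div (by linarith) (mul_pos (by linarith) (by linarith)).ne',
    log_mul (by linarith) (by linarith)]
  ring

lemma intervalMean_ratio_le_of_pos {α β γ c : ℝ} (hα : α ≠ 0) (hβ : β ≠ 0) (hαβ : α < β)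
    (hγα : -1 < α * γ) (hγβ : -1 < β * γ) (hc0 : 0 < c) (hc1 : c < 1) :
    intervalMean β c 1 (fun x => |x| ^ γ) / intervalMean α c 1 (fun x => |x| ^ γ) ≤
      intervalMean β 0 1 (fun x => |x| ^ γ) / intervalMean α 0 1 (fun x => |x| ^ γ) := by
  have hslope : (log (1 - c ^ (β * γ + 1)) - log (1 - c)) / β ≤
      (log (1 - c ^ (α * γ + 1)) - log (1 - c)) / α := by
    have := (concaveOn_log_one_sub_rpow_mul_add_one hc0 hc1 γ).slope_anti
      (by simp : (0 : ℝ) ∈ {p : ℝ | -1 < p * γ}) ⟨hγα, hα⟩ ⟨hγβ, hβ⟩ hαβ.le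
    simpa [slope_def_field] using this
  have hpos := fun p x (hw : -1 < p * γ) (hx0 : 0 ≤ x) (hx1 : x < 1) =>
    intervalMean_abs_rpow_pos hw hx0 hx1
  rw [← log_le_log_iff (div_pos (hpos _ _ hγβ hc0.le hc1) (hpos _ _ hγα hc0.le hc1))
      (div_pos (hpos _ _ hγβ le_rfl one_pos) (hpos _ _ hγα le_rfl one_pos)),
    log_div (hpos _ _ hγβ hc0.le hc1).ne' (hpos _ _ hγα hc0.le hc1).ne',
    log_div (hpos _ _ hγβ le_rfl one_pos).ne' (hpos _ _ hγα le_rfl one_pos).ne',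
    log_intervalMean_abs_rpow hγβ hc0.le hc1, log_intervalMean_abs_rpow hγα hc0.le hc1,
    log_intervalMean_abs_rpow hγβ le_rfl one_pos, log_intervalMean_abs_rpow hγα le_rfl one_pos,
    zero_rpow (by linarith), zero_rpow (by linarith)]
  simp only [sub_zero, log_one]
  linear_combination hslope

lemma exists_mem_Icc_intervalMean_ratio_le {α β γ a b : ℝ} (hα : α ≠ 0) (hβ : β ≠ 0)
    (hαβ : α < β) (hγα : -1 < α * γ) (hγβ : -1 < β * γ) (hab : a < b) :
    ∃ ε ∈ Icc (0 : ℝ) 1,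
      intervalMean β a b (fun x => |x| ^ γ) / intervalMean α a b (fun x => |x| ^ γ) ≤
        intervalMean β (-ε) 1 (fun x => |x| ^ γ) / intervalMean α (-ε) 1 (fun x => |x| ^ γ) := by
  wlog hsum : 0 ≤ a + b generalizing a b with H
  · obtain ⟨ε, hε, hle⟩ := H (a := -b) (b := -a) (by linarith) (by linarith)
    simp only [intervalMean_comp_neg, abs_neg] at hle
    exact ⟨ε, hε, hle⟩
  have hb : 0 < b := by linarith
  have hscale : intervalMean β a b (fun x => |x| ^ γ) / intervalMean α a b (fun x => |x| ^ γ) =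
      intervalMean β (a / b) 1 (fun x => |x| ^ γ) /
        intervalMean α (a / b) 1 (fun x => |x| ^ γ) := by
    rw [intervalMean_abs_rpow_eq_rpow_mul hβ hb hab.le,
      intervalMean_abs_rpow_eq_rpow_mul hα hb hab.le,
      mul_div_mul_left _ _ (rpow_pos_of_pos hb γ).ne']
  rw [hscale]
  rcases le_or_gt (a / b) 0 with hc | hc
  · refine ⟨-(a / b), ⟨neg_nonneg.2 hc, ?_⟩, by rw [neg_neg]⟩
    rw [neg_le, le_div_iff₀ hb]
    linarith
  · refine ⟨0, ⟨le_rfl, zero_le_one⟩, ?_⟩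
    rw [neg_zero]
    exact intervalMean_ratio_le_of_pos hα hβ hαβ hγα hγβ hc ((div_lt_one hb).2 hab)

/-- For `α < β` with `αβ ≠ 0` and `γ` with `αγ > -1`, `βγ > -1`, the supremum over all
bounded intervals `I ⊂ ℝ` of `M_{I,β}(|x|^γ)/M_{I,α}(|x|^γ)` equals the supremum over
`ε ∈ [0,1]` of the same ratio for the intervals `(-ε, 1)`. -/
theorem sup_ratio_power_over_special_intervals
    (α β γ : ℝ) (hαβ : α < β) (h0 : α * β ≠ 0)
    (hγα : α * γ > -1) (hγβ : β * γ > -1) :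
    sSup (ratioSetAll α β (fun x => |x| ^ γ)) =
      sSup {r | ∃ ε ∈ Icc (0 : ℝ) 1,
        r = intervalMean β (-ε) 1 (fun x => |x| ^ γ) /
            intervalMean α (-ε) 1 (fun x => |x| ^ γ)} := by
  apply csSup_eq_csSup_of_forall_exists_le
  · rintro _ ⟨a, b, hab, rfl⟩
    obtain ⟨ε, hε, hle⟩ := exists_mem_Icc_intervalMean_ratio_le (left_ne_zero_of_mul h0)
      (right_ne_zero_of_mul h0) hαβ hγα hγβ hab
    exact ⟨_, ⟨ε, hε, rfl⟩, hle⟩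
  · rintro _ ⟨ε, hε, rfl⟩
    exact ⟨_, ⟨-ε, 1, by linarith [hε.1], rfl⟩, le_rfl⟩
end

section
/- Let 0 < α < β and let 0 ≤ γ₁ < γ₂. Then C_{α,β,γ₁}(ε) < C_{α,β,γ₂}(ε) for all ε ∈ (0,1), while C_{α,β,γ₁}(ε) = C_{α,β,γ₂}(ε) for ε = 0 and ε = 1. -/
/-!
For `ε ∈ (0,1)` the dependence of `C_{α,β,γ}(ε)` on `γ` is the factor `exp (g γ)` with
`g γ = log (ε^{γβ+1} + 1) / β - log (ε^{γα+1} + 1) / α`, and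
`g' γ = log ε · (σ (γβ+1) - σ (γα+1))` where `σ x = ε^x / (ε^x + 1)`. For `ε < 1` the map `σ` is
decreasing and `log ε < 0`, so `g' > 0` once `γβ + 1 > γα + 1`, i.e. for `γ > 0`.
At `ε = 0` and `ε = 1` the function is identically `1`.
-/

open Set

/-- The function `C_{α,β,γ}(ε)` from the paper:
`C_{α,β,γ}(ε) = (ε^{γβ+1}+1)^{1/β} (1+ε)^{1/α} / ((ε^{γα+1}+1)^{1/α} (1+ε)^{1/β})`. -/
noncomputable def Cfun (α β γ ε : ℝ) : ℝ :=
  ((ε ^ (γ * β + 1) + 1) ^ (1 / β) * (1 + ε) ^ (1 / α)) /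
    ((ε ^ (γ * α + 1) + 1) ^ (1 / α) * (1 + ε) ^ (1 / β))

open Real

theorem hasDerivAt_log_rpow_add_one_div {ε p : ℝ} (hε : 0 < ε) (hp : p ≠ 0) (γ : ℝ) :
    HasDerivAt (fun γ => log (ε ^ (γ * p + 1) + 1) / p)
      (log ε * (ε ^ (γ * p + 1) / (ε ^ (γ * p + 1) + 1))) γ := by
  have hexp : HasDerivAt (fun γ => ε ^ (γ * p + 1)) (ε ^ (γ * p + 1) * log ε * p) γ := by
    refine (hasStrictDerivAt_const_rpow hε (γ * p + 1)).hasDerivAt.comp γ ?_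
    simpa using ((hasDerivAt_id γ).mul_const p).add_const 1
  refine (((hexp.add_const 1).log (by positivity)).div_const p).congr_deriv ?_
  field_simp

theorem div_add_one_lt_div_add_one {a b : ℝ} (ha : 0 ≤ a) (hab : a < b) :
    a / (a + 1) < b / (b + 1) := by
  rw [div_lt_div_iff₀ (by positivity) (by linarith)]
  linarith

theorem Cfun_eq_exp_mul {α β γ ε : ℝ} (hε : 0 ≤ ε) :
    Cfun α β γ ε = exp (log (ε ^ (γ * β + 1) + 1) / β - log (ε ^ (γ * α + 1) + 1) / α) *
      ((1 + ε) ^ (1 / α) / (1 + ε) ^ (1 / β)) := by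
  rw [exp_sub, div_eq_mul_one_div (log _), div_eq_mul_one_div (log _),
    ← rpow_def_of_pos (by positivity), ← rpow_def_of_pos (by positivity), div_mul_div_comm, Cfun]

theorem Cfun_strictMonoOn_Ici_zero {α β ε : ℝ} (hα : α ≠ 0) (hβ : β ≠ 0) (hαβ : α < β)
    (hε₀ : 0 < ε) (hε₁ : ε < 1) : StrictMonoOn (fun γ => Cfun α β γ ε) (Ici 0) := by
  set g := fun γ => log (ε ^ (γ * β + 1) + 1) / β - log (ε ^ (γ * α + 1) + 1) / α
  have hg : ∀ γ, HasDerivAt g (log ε * (ε ^ (γ * β + 1) / (ε ^ (γ * β + 1) + 1)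
      - ε ^ (γ * α + 1) / (ε ^ (γ * α + 1) + 1))) γ := fun γ =>
    (hasDerivAt_log_rpow_add_one_div hε₀ hβ γ).sub (hasDerivAt_log_rpow_add_one_div hε₀ hα γ)
      |>.congr_deriv (mul_sub _ _ _).symm
  have hg_mono : StrictMonoOn g (Ici 0) := by
    refine strictMonoOn_of_deriv_pos (convex_Ici 0)
      (fun γ _ => (hg γ).continuousAt.continuousWithinAt) fun γ hγ => ?_
    rw [interior_Ici, mem_Ioi] at hγ
    rw [(hg γ).deriv]
    refine mul_pos_of_neg_of_neg (log_neg hε₀ hε₁) (sub_neg.2 ?_)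
    exact div_add_one_lt_div_add_one (by positivity)
      (rpow_lt_rpow_of_exponent_gt hε₀ hε₁ (by nlinarith))
  intro γ₁ h₁ γ₂ h₂ hγ
  simp only [Cfun_eq_exp_mul hε₀.le]
  exact mul_lt_mul_of_pos_right (exp_lt_exp.2 (hg_mono h₁ h₂ hγ)) (by positivity)

theorem Cfun_zero {α β γ : ℝ} (hα : γ * α + 1 ≠ 0) (hβ : γ * β + 1 ≠ 0) :
    Cfun α β γ 0 = 1 := by
  simp [Cfun, zero_rpow hα, zero_rpow hβ]

theorem Cfun_one (α β γ : ℝ) : Cfun α β γ 1 = 1 := by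
  rw [Cfun, one_rpow, one_rpow, mul_comm]
  exact div_self (by positivity)

/-- For `0 < α < β` and `0 ≤ γ₁ < γ₂`, the curves `C_{α,β,γ₁}` and `C_{α,β,γ₂}` satisfy
`C_{α,β,γ₁}(ε) < C_{α,β,γ₂}(ε)` on `(0,1)`, with equality at the endpoints `0` and `1`. -/
theorem Cfun_strict_mono_in_gamma_nonneg
    (α β γ₁ γ₂ : ℝ) (hα : 0 < α) (hαβ : α < β) (hγ₁ : 0 ≤ γ₁) (hγ : γ₁ < γ₂) :
    (∀ ε : ℝ, 0 < ε → ε < 1 → Cfun α β γ₁ ε < Cfun α β γ₂ ε) ∧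
      Cfun α β γ₁ 0 = Cfun α β γ₂ 0 ∧ Cfun α β γ₁ 1 = Cfun α β γ₂ 1 := by
  have hβ : 0 < β := hα.trans hαβ
  have hγ₂ : 0 ≤ γ₂ := hγ₁.trans hγ.le
  refine ⟨fun ε hε₀ hε₁ => Cfun_strictMonoOn_Ici_zero hα.ne' hβ.ne' hαβ hε₀ hε₁ hγ₁ hγ₂ hγ,
    ?_, by rw [Cfun_one, Cfun_one]⟩
  rw [Cfun_zero, Cfun_zero] <;> positivity
end

section
/- Let α < β with αβ ≠ 0, let γ ≠ 0 satisfy αγ > −1 and βγ > −1, and let ε ∈ (0,1). Then C_{α,β,γ}(ε) > 1. -/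
open Set

/-!
With `ψ t = log (ε ^ (γ t + 1) + 1)`, the logarithm of `C_{α,β,γ}(ε)` is the difference of the
secant slopes `(ψ β - ψ 0) / β - (ψ α - ψ 0) / α`. Since `ψ` is the softplus function
`x ↦ log (1 + eˣ)` composed with the non-constant affine map `t ↦ (γ t + 1) log ε`, it is strictly
convex, so its secant slopes from `0` are strictly increasing and this difference is positive.
-/

open Real

theorem StrictConvexOn.comp_mul_add {f : ℝ → ℝ} (hf : StrictConvexOn ℝ univ f) {c : ℝ}
    (hc : c ≠ 0) (L : ℝ) : StrictConvexOn ℝ univ fun x => f (c * x + L) := by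
  refine ⟨convex_univ, fun x _ y _ hxy a b ha hb hab => ?_⟩
  have hne : c * x + L ≠ c * y + L := by simpa [hc] using hxy
  convert hf.2 (mem_univ _) (mem_univ _) hne ha hb hab using 2
  simp only [smul_eq_mul]
  linear_combination L * hab.symm

theorem strictMono_exp_div_one_add_exp : StrictMono fun x : ℝ => exp x / (1 + exp x) := by
  intro x y hxy
  rw [div_lt_div_iff₀ (by positivity) (by positivity)]
  nlinarith [exp_lt_exp.2 hxy]

theorem strictConvexOn_log_one_add_exp : StrictConvexOn ℝ univ fun x : ℝ => log (1 + exp x) := by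
  have hpos (x : ℝ) : 0 < 1 + exp x := by positivity
  have hderiv : deriv (fun x : ℝ => log (1 + exp x)) = fun x => exp x / (1 + exp x) :=
    funext fun x => (((hasDerivAt_exp x).const_add 1).log (hpos x).ne').deriv
  refine StrictMono.strictConvexOn_univ_of_deriv ?_ (hderiv ▸ strictMono_exp_div_one_add_exp)
  exact (continuous_const.add continuous_exp).log fun x => (hpos x).ne'

theorem strictConvexOn_log_rpow_mul_add_add_one {a γ : ℝ} (ha₀ : 0 < a) (ha₁ : a ≠ 1)
    (hγ : γ ≠ 0) (δ : ℝ) : StrictConvexOn ℝ univ fun t : ℝ => log (a ^ (γ * t + δ) + 1) := by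
  have hc : log a * γ ≠ 0 := mul_ne_zero (log_ne_zero_of_pos_of_ne_one ha₀ ha₁) hγ
  convert strictConvexOn_log_one_add_exp.comp_mul_add hc (log a * δ) using 3 with t
  rw [rpow_def_of_pos ha₀, add_comm]
  ring_nf

theorem Cfun_eq_exp_sub_secants {ε : ℝ} (hε : 0 < ε) (α β γ : ℝ) :
    Cfun α β γ ε = exp ((log (ε ^ (γ * β + 1) + 1) - log (ε + 1)) / β -
      (log (ε ^ (γ * α + 1) + 1) - log (ε + 1)) / α) := by
  have hA : 0 < ε ^ (γ * β + 1) + 1 := by positivity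
  have hB : 0 < 1 + ε := by positivity
  have hD : 0 < ε ^ (γ * α + 1) + 1 := by positivity
  simp only [Cfun, rpow_def_of_pos hA, rpow_def_of_pos hB, rpow_def_of_pos hD]
  rw [← exp_add, ← exp_add, ← exp_sub, add_comm ε 1]
  congr 1
  ring

theorem Cfun_gt_one_general
    (α β γ ε : ℝ) (hαβ : α < β) (h0 : α * β ≠ 0) (hγ : γ ≠ 0)
    (hε₀ : 0 < ε) (hε₁ : ε < 1) :
    1 < Cfun α β γ ε := by
  rw [Cfun_eq_exp_sub_secants hε₀, one_lt_exp_iff, sub_pos]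
  simpa using (strictConvexOn_log_rpow_mul_add_add_one hε₀ hε₁.ne hγ 1).secant_strict_mono
    (mem_univ 0) (mem_univ α) (mem_univ β) (left_ne_zero_of_mul h0) (right_ne_zero_of_mul h0) hαβ

/-- For `α < β` with `αβ ≠ 0`, `γ ≠ 0` with `αγ > -1`, `βγ > -1`, and `ε ∈ (0,1)`,
one has `C_{α,β,γ}(ε) > 1`. -/
theorem Cfun_gt_one
    (α β γ ε : ℝ) (hαβ : α < β) (h0 : α * β ≠ 0) (hγ : γ ≠ 0)
    (hγα : α * γ > -1) (hγβ : β * γ > -1) (hε₀ : 0 < ε) (hε₁ : ε < 1) :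
    1 < Cfun α β γ ε :=
  Cfun_gt_one_general α β γ ε hαβ h0 hγ hε₀ hε₁
end

section
/- Let 0 < α < β and γ ≥ 0. Then for all ε ∈ [0,1] one has C_{α,β,γ}(ε) ≤ (1+ε)^{1/α − 1/β}; in particular max over ε ∈ [0,1] of C_{α,β,γ}(ε) is at most 2^{1/α − 1/β}. -/
open Set

/-- For `0 < α < β` and `γ ≥ 0`: `C_{α,β,γ}(ε) ≤ (1+ε)^{1/α-1/β}` on `[0,1]`, whence the
maximum of `C_{α,β,γ}` over `[0,1]` is at most `2^{1/α-1/β}`. -/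
theorem Cfun_le_of_gamma_nonneg
    (α β γ : ℝ) (hα : 0 < α) (hαβ : α < β) (hγ : 0 ≤ γ) :
    (∀ ε ∈ Icc (0 : ℝ) 1, Cfun α β γ ε ≤ (1 + ε) ^ (1 / α - 1 / β)) ∧
      sSup (Cfun α β γ '' Icc (0 : ℝ) 1) ≤ (2 : ℝ) ^ (1 / α - 1 / β) := by
  have hβ : 0 < β := hα.trans hαβ
  have hinv : 1 / β ≤ 1 / α := one_div_le_one_div_of_le hα hαβ.le
  have key : ∀ ε ∈ Icc (0 : ℝ) 1, Cfun α β γ ε ≤ (1 + ε) ^ (1 / α - 1 / β) := by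
    intro ε hε
    obtain ⟨h0, h1⟩ := hε
    have h1ε : (0 : ℝ) < 1 + ε := by linarith
    have hxnn : 0 ≤ ε ^ (γ * α + 1) := Real.rpow_nonneg h0 _
    have hynn : 0 ≤ ε ^ (γ * β + 1) := Real.rpow_nonneg h0 _
    have hCpos : 0 < (ε ^ (γ * α + 1) + 1) ^ (1 / α) :=
      Real.rpow_pos_of_pos (by linarith) _
    have hDpos : 0 < (1 + ε) ^ (1 / β) := Real.rpow_pos_of_pos h1ε _
    have hA : (ε ^ (γ * β + 1) + 1) ^ (1 / β) ≤ (ε ^ (γ * α + 1) + 1) ^ (1 / α) := by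
      have step1 : ε ^ (γ * β + 1) ≤ ε ^ (γ * α + 1) := by
        rcases eq_or_lt_of_le h0 with h | h
        · rw [← h, Real.zero_rpow (by nlinarith), Real.zero_rpow (by nlinarith)]
        · exact Real.rpow_le_rpow_of_exponent_ge h h1 (by nlinarith)
      calc (ε ^ (γ * β + 1) + 1) ^ (1 / β)
          ≤ (ε ^ (γ * α + 1) + 1) ^ (1 / β) :=
            Real.rpow_le_rpow (by linarith) (by linarith) (by positivity)
        _ ≤ (ε ^ (γ * α + 1) + 1) ^ (1 / α) :=
            Real.rpow_le_rpow_of_exponent_le (by linarith) hinv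
    unfold Cfun
    rw [Real.rpow_sub h1ε, ← div_mul_div_comm]
    calc (ε ^ (γ * β + 1) + 1) ^ (1 / β) / (ε ^ (γ * α + 1) + 1) ^ (1 / α) *
          ((1 + ε) ^ (1 / α) / (1 + ε) ^ (1 / β))
        ≤ 1 * ((1 + ε) ^ (1 / α) / (1 + ε) ^ (1 / β)) := by
          apply mul_le_mul_of_nonneg_right ((div_le_one hCpos).2 hA)
          positivity
      _ = (1 + ε) ^ (1 / α) / (1 + ε) ^ (1 / β) := one_mul _
  refine ⟨key, Real.sSup_le ?_ (by positivity)⟩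
  rintro x ⟨ε, hε, rfl⟩
  refine (key ε hε).trans ?_
  exact Real.rpow_le_rpow (by linarith [hε.1]) (by linarith [hε.2]) (by linarith)
end

section
/- Let 0 < α < β and −1/β < γ < 0. Then for all ε ∈ [0,1] one has C_{α,β,γ}(ε) ≤ (2/(ε+1))^{1/β}; in particular max over ε ∈ [0,1] of C_{α,β,γ}(ε) is at most 2^{1/β}. -/
open Set

/-- For `0 < α < β` and `-1/β < γ < 0`: `C_{α,β,γ}(ε) ≤ (2/(ε+1))^{1/β}` on `[0,1]`,
whence the maximum of `C_{α,β,γ}` over `[0,1]` is at most `2^{1/β}`. -/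
theorem Cfun_le_of_gamma_neg
    (α β γ : ℝ) (hα : 0 < α) (hαβ : α < β) (hγ₁ : -(1 / β) < γ) (hγ₂ : γ < 0) :
    (∀ ε ∈ Icc (0 : ℝ) 1, Cfun α β γ ε ≤ (2 / (ε + 1)) ^ (1 / β)) ∧
      sSup (Cfun α β γ '' Icc (0 : ℝ) 1) ≤ (2 : ℝ) ^ (1 / β) := by
  have hβ : 0 < β := hα.trans hαβ
  have hγβ : -1 < γ * β := by
    have h := mul_lt_mul_of_pos_right hγ₁ hβ
    rw [neg_mul, div_mul_cancel₀ _ hβ.ne'] at h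
    linarith
  have ha : 0 < γ * β + 1 := by linarith
  have hab : γ * β < γ * α := mul_lt_mul_of_neg_left hαβ hγ₂
  have hb : 0 < γ * α + 1 := by linarith
  have hb1 : γ * α + 1 ≤ 1 := by nlinarith [mul_neg_of_neg_of_pos hγ₂ hα]
  have key : ∀ ε ∈ Icc (0 : ℝ) 1, Cfun α β γ ε ≤ (2 / (ε + 1)) ^ (1 / β) := by
    rintro ε ⟨hε0, hε1⟩
    have h1ε : (0 : ℝ) < 1 + ε := by linarith
    have hεb : ε ≤ ε ^ (γ * α + 1) := by
      rcases eq_or_lt_of_le hε0 with h | h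
      · simp [← h, Real.zero_rpow hb.ne']
      · calc ε = ε ^ (1 : ℝ) := (Real.rpow_one ε).symm
          _ ≤ ε ^ (γ * α + 1) := Real.rpow_le_rpow_of_exponent_ge h hε1 hb1
    have hA : ε ^ (γ * β + 1) + 1 ≤ 2 := by
      have := Real.rpow_le_one hε0 hε1 ha.le
      linarith
    have hden : (0 : ℝ) < ε ^ (γ * α + 1) + 1 := by positivity
    have hAnn : (0 : ℝ) ≤ ε ^ (γ * β + 1) + 1 := by positivity
    have h1 : (ε ^ (γ * β + 1) + 1) ^ (1 / β) / (1 + ε) ^ (1 / β)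
        ≤ (2 / (1 + ε)) ^ (1 / β) := by
      rw [← Real.div_rpow hAnn h1ε.le]
      gcongr
    have h2 : (1 + ε) ^ (1 / α) / (ε ^ (γ * α + 1) + 1) ^ (1 / α) ≤ 1 := by
      rw [div_le_one (by positivity)]
      exact Real.rpow_le_rpow h1ε.le (by linarith) (by positivity)
    have heq : Cfun α β γ ε
        = ((ε ^ (γ * β + 1) + 1) ^ (1 / β) / (1 + ε) ^ (1 / β)) *
          ((1 + ε) ^ (1 / α) / (ε ^ (γ * α + 1) + 1) ^ (1 / α)) := by
      rw [Cfun]; ring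
    rw [heq]
    calc ((ε ^ (γ * β + 1) + 1) ^ (1 / β) / (1 + ε) ^ (1 / β)) *
          ((1 + ε) ^ (1 / α) / (ε ^ (γ * α + 1) + 1) ^ (1 / α))
        ≤ (2 / (1 + ε)) ^ (1 / β) * 1 := by
          apply mul_le_mul h1 h2 (by positivity) (by positivity)
      _ = (2 / (ε + 1)) ^ (1 / β) := by rw [mul_one, add_comm]
  refine ⟨key, ?_⟩
  apply Real.sSup_le
  · rintro x ⟨ε, hε, rfl⟩
    calc Cfun α β γ ε ≤ (2 / (ε + 1)) ^ (1 / β) := key ε hε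
      _ ≤ (2 : ℝ) ^ (1 / β) := by
          apply Real.rpow_le_rpow (div_nonneg (by norm_num) (by linarith [hε.1])) _
            (by positivity)
          exact div_le_self (by norm_num) (by linarith [hε.1])
  · positivity
end

section
/- Let 0 < α < β. Then the supremum over γ ≥ 0 of C_{α,β,γ} equals 2^{1/α − 1/β}, where C_{α,β,γ} = max over ε ∈ [0,1] of C_{α,β,γ}(ε). -/
open Set

/-- `C_{α,β,γ}`: the maximum of `C_{α,β,γ}(ε)` over `ε ∈ [0,1]`. -/
noncomputable def Cmax (α β γ : ℝ) : ℝ :=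
  sSup (Cfun α β γ '' Icc (0 : ℝ) 1)

/-!
Writing `C_{α,β,γ}(ε) = (ε^{γβ+1}+1)^{1/β} / (ε^{γα+1}+1)^{1/α} · (1+ε)^{1/α-1/β}`, the first
factor is at most `1` for `ε ∈ [0,1]` (a smaller base under a larger root), so every
`C_{α,β,γ}(ε)` is at most `(1+ε)^{1/α-1/β} ≤ 2^{1/α-1/β}`. Conversely, for fixed `ε ∈ (0,1)` the
first factor tends to `1` as `γ → ∞`, so the supremum is at least `(1+ε)^{1/α-1/β}`, and letting
`ε → 1` gives `2^{1/α-1/β}`.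
-/

open Filter Topology

lemma Cfun_eq_mul (α β γ : ℝ) {ε : ℝ} (hε : 0 ≤ ε) :
    Cfun α β γ ε = (ε ^ (γ * β + 1) + 1) ^ (1 / β) / (ε ^ (γ * α + 1) + 1) ^ (1 / α) *
      (1 + ε) ^ (1 / α - 1 / β) := by
  have h1ε : 0 < 1 + ε := by linarith
  have hden : 0 < (ε ^ (γ * α + 1) + 1) ^ (1 / α) := by positivity
  rw [Cfun, Real.rpow_sub h1ε]
  field_simp

lemma rpow_one_div_le_of_le {x a b : ℝ} (hx : 1 ≤ x) (ha : 0 < a) (hab : a ≤ b) :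
    x ^ (1 / b) ≤ x ^ (1 / a) :=
  Real.rpow_le_rpow_of_exponent_le hx (one_div_le_one_div_of_le ha hab)

lemma rpow_mul_add_one_root_le {α β γ ε : ℝ} (hα : 0 < α) (hαβ : α ≤ β) (hγ : 0 ≤ γ)
    (hε : ε ∈ Icc (0 : ℝ) 1) :
    (ε ^ (γ * β + 1) + 1) ^ (1 / β) ≤ (ε ^ (γ * α + 1) + 1) ^ (1 / α) := by
  obtain ⟨hε0, hε1⟩ := hε
  have hβ : 0 < β := hα.trans_le hαβ
  have hexp : ε ^ (γ * β + 1) ≤ ε ^ (γ * α + 1) :=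
    Real.rpow_le_rpow_of_exponent_ge' hε0 hε1 (by positivity) (by nlinarith)
  calc (ε ^ (γ * β + 1) + 1) ^ (1 / β)
      ≤ (ε ^ (γ * α + 1) + 1) ^ (1 / β) := by gcongr
    _ ≤ (ε ^ (γ * α + 1) + 1) ^ (1 / α) :=
        rpow_one_div_le_of_le (by linarith [Real.rpow_nonneg hε0 (γ * α + 1)]) hα hαβ

lemma Cfun_le_two_rpow {α β γ ε : ℝ} (hα : 0 < α) (hαβ : α ≤ β) (hγ : 0 ≤ γ)
    (hε : ε ∈ Icc (0 : ℝ) 1) :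
    Cfun α β γ ε ≤ 2 ^ (1 / α - 1 / β) := by
  obtain ⟨hε0, hε1⟩ := hε
  have hp : 0 ≤ 1 / α - 1 / β := sub_nonneg.2 (one_div_le_one_div_of_le hα hαβ)
  have hratio : (ε ^ (γ * β + 1) + 1) ^ (1 / β) / (ε ^ (γ * α + 1) + 1) ^ (1 / α) ≤ 1 :=
    div_le_one_of_le₀ (rpow_mul_add_one_root_le hα hαβ hγ ⟨hε0, hε1⟩) (by positivity)
  have hpow : (1 + ε) ^ (1 / α - 1 / β) ≤ 2 ^ (1 / α - 1 / β) := by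
    gcongr
    linarith
  rw [Cfun_eq_mul α β γ hε0]
  exact (mul_le_of_le_one_left (by positivity) hratio).trans hpow

lemma bddAbove_Cfun_image {α β γ : ℝ} (hα : 0 < α) (hαβ : α ≤ β) (hγ : 0 ≤ γ) :
    BddAbove (Cfun α β γ '' Icc 0 1) :=
  ⟨_, forall_mem_image.2 fun _ hε => Cfun_le_two_rpow hα hαβ hγ hε⟩

lemma Cmax_le_two_rpow {α β γ : ℝ} (hα : 0 < α) (hαβ : α ≤ β) (hγ : 0 ≤ γ) :
    Cmax α β γ ≤ 2 ^ (1 / α - 1 / β) :=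
  Real.sSup_le (forall_mem_image.2 fun _ hε => Cfun_le_two_rpow hα hαβ hγ hε) (by positivity)

lemma tendsto_rpow_mul_add_one_add_one {c ε : ℝ} (p : ℝ) (hc : 0 < c) (hε0 : 0 < ε)
    (hε1 : ε < 1) :
    Tendsto (fun γ : ℝ => (ε ^ (γ * c + 1) + 1) ^ p) atTop (𝓝 1) := by
  have hexp : Tendsto (fun γ : ℝ => γ * c + 1) atTop atTop :=
    tendsto_atTop_add_const_right _ 1 (tendsto_id.atTop_mul_const hc)
  have hpow : Tendsto (fun γ : ℝ => ε ^ (γ * c + 1)) atTop (𝓝 0) :=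
    (tendsto_rpow_atTop_of_base_lt_one ε (by linarith) hε1).comp hexp
  simpa using (hpow.add_const 1).rpow_const (p := p) (by norm_num)

lemma tendsto_Cfun_atTop {α β ε : ℝ} (hα : 0 < α) (hβ : 0 < β) (hε0 : 0 < ε) (hε1 : ε < 1) :
    Tendsto (fun γ => Cfun α β γ ε) atTop (𝓝 ((1 + ε) ^ (1 / α - 1 / β))) := by
  have hlim := ((tendsto_rpow_mul_add_one_add_one (1 / β) hβ hε0 hε1).div
    (tendsto_rpow_mul_add_one_add_one (1 / α) hα hε0 hε1) one_ne_zero).mul_const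
    ((1 + ε) ^ (1 / α - 1 / β))
  simpa only [Cfun_eq_mul α β _ hε0.le, Pi.div_apply, div_one, one_mul] using hlim

/-- For `0 < α < β`, the supremum over `γ ≥ 0` of `C_{α,β,γ}` equals `2^{1/α-1/β}`. -/
theorem sup_Cmax_gamma_nonneg
    (α β : ℝ) (hα : 0 < α) (hαβ : α < β) :
    sSup {c | ∃ γ : ℝ, 0 ≤ γ ∧ c = Cmax α β γ} = (2 : ℝ) ^ (1 / α - 1 / β) := by
  set S := {c | ∃ γ : ℝ, 0 ≤ γ ∧ c = Cmax α β γ}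
  have hS_le : ∀ c ∈ S, c ≤ 2 ^ (1 / α - 1 / β) := by
    rintro _ ⟨γ, hγ, rfl⟩
    exact Cmax_le_two_rpow hα hαβ.le hγ
  have hCfun_le : ∀ γ, 0 ≤ γ → ∀ ε ∈ Icc (0 : ℝ) 1, Cfun α β γ ε ≤ sSup S := fun γ hγ ε hε =>
    (le_csSup (bddAbove_Cfun_image hα hαβ.le hγ) (mem_image_of_mem _ hε)).trans
      (le_csSup ⟨_, hS_le⟩ ⟨γ, hγ, rfl⟩)
  have hlower : ∀ ε ∈ Ioo (0 : ℝ) 1, (1 + ε) ^ (1 / α - 1 / β) ≤ sSup S := fun ε hε =>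
    le_of_tendsto (tendsto_Cfun_atTop hα (hα.trans hαβ) hε.1 hε.2)
      ((eventually_ge_atTop 0).mono fun γ hγ => hCfun_le γ hγ ε (Ioo_subset_Icc_self hε))
  have hlim : Tendsto (fun ε : ℝ => (1 + ε) ^ (1 / α - 1 / β)) (𝓝[<] 1)
      (𝓝 (2 ^ (1 / α - 1 / β))) := by
    have h : Tendsto (fun ε : ℝ => 1 + ε) (𝓝[<] 1) (𝓝 2) :=
      ((continuous_const_add 1).tendsto' 1 2 one_add_one_eq_two).mono_left nhdsWithin_le_nhds
    exact h.rpow_const (Or.inl two_ne_zero)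
  refine le_antisymm (Real.sSup_le hS_le (by positivity)) (le_of_tendsto hlim ?_)
  filter_upwards [Ioo_mem_nhdsLT (zero_lt_one' ℝ)] with ε hε
  exact hlower ε hε
end

section
/- Let α < β < 0. Then for all ε ∈ [0,1]: if γ < 0 with αγ > −1, then C_{α,β,γ}(ε) ≤ (1+ε)^{1/α − 1/β} (hence C_{α,β,γ} ≤ 2^{1/α − 1/β}); and if 0 ≤ γ < −1/α, then C_{α,β,γ}(ε) ≤ ((ε+1)/2)^{1/α} (hence C_{α,β,γ} ≤ 2^{−1/α}). -/
open Set

lemma ptwise1 (α β γ ε : ℝ) (hαβ : α < β) (hβ : β < 0) (hγ : γ < 0)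
    (hαγ : α * γ > -1) (hε0 : 0 ≤ ε) (hε1 : ε ≤ 1) :
    Cfun α β γ ε ≤ (1 + ε) ^ (1 / α - 1 / β) := by
  have hα : α < 0 := hαβ.trans hβ
  have hP : (0:ℝ) < 1 + ε := by linarith
  have hγα : (0:ℝ) < γ * α + 1 := by nlinarith
  have hγβ1 : (0:ℝ) < γ * β + 1 := by nlinarith
  have hexp : γ * β + 1 ≤ γ * α + 1 := by nlinarith
  set X : ℝ := ε ^ (γ * β + 1) + 1 with hXdef
  set Y : ℝ := ε ^ (γ * α + 1) + 1 with hYdef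
  have hX1 : (1:ℝ) ≤ X := by
    have := Real.rpow_nonneg hε0 (γ * β + 1); simp [hXdef]; linarith
  have hY1 : (1:ℝ) ≤ Y := by
    have := Real.rpow_nonneg hε0 (γ * α + 1); simp [hYdef]; linarith
  -- Step A : Y ≤ X
  have hA : Y ≤ X := by
    rcases eq_or_lt_of_le hε0 with h0 | h0
    · simp [hXdef, hYdef, ← h0, Real.zero_rpow hγα.ne', Real.zero_rpow hγβ1.ne']
    · have := Real.rpow_le_rpow_of_exponent_ge h0 hε1 hexp
      simp only [hXdef, hYdef]; linarith
  -- Step B : X ≤ X ^ (α/β)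
  have hθ : (1:ℝ) ≤ α / β := by
    rw [le_div_iff_of_neg hβ]; linarith
  have hB : X ≤ X ^ (α / β) := by
    calc X = X ^ (1:ℝ) := (Real.rpow_one X).symm
    _ ≤ X ^ (α / β) := Real.rpow_le_rpow_of_exponent_le hX1 hθ
  -- key : X^(1/β) ≤ Y^(1/α)
  have hkey : X ^ (1 / β) ≤ Y ^ (1 / α) := by
    have h1 : (X ^ (α / β)) ^ (1 / α) ≤ Y ^ (1 / α) :=
      Real.rpow_le_rpow_of_nonpos (by linarith) (hA.trans hB)
        (by rw [one_div_nonpos]; exact hα.le)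
    calc X ^ (1 / β) = X ^ (α / β * (1 / α)) := by
          congr 1
          have hαne : α ≠ 0 := hα.ne
          have hβne : β ≠ 0 := hβ.ne
          field_simp
    _ = (X ^ (α / β)) ^ (1 / α) := Real.rpow_mul (by linarith) _ _
    _ ≤ Y ^ (1 / α) := h1
  have hYpos : (0:ℝ) < Y ^ (1 / α) := Real.rpow_pos_of_pos (by linarith) _
  have hPα : (0:ℝ) < (1 + ε) ^ (1 / α) := Real.rpow_pos_of_pos hP _
  have hPβ : (0:ℝ) < (1 + ε) ^ (1 / β) := Real.rpow_pos_of_pos hP _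
  have : Cfun α β γ ε ≤ (Y ^ (1 / α) * (1 + ε) ^ (1 / α)) /
      (Y ^ (1 / α) * (1 + ε) ^ (1 / β)) := by
    unfold Cfun
    apply div_le_div₀ (by positivity)
      (mul_le_mul_of_nonneg_right hkey hPα.le) (by positivity) le_rfl
  calc Cfun α β γ ε ≤ (Y ^ (1 / α) * (1 + ε) ^ (1 / α)) /
      (Y ^ (1 / α) * (1 + ε) ^ (1 / β)) := this
  _ = (1 + ε) ^ (1 / α) / (1 + ε) ^ (1 / β) := by
      rw [mul_div_mul_left _ _ hYpos.ne']
  _ = (1 + ε) ^ (1 / α - 1 / β) := (Real.rpow_sub hP _ _).symm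

lemma ptwise2 (α β γ ε : ℝ) (hαβ : α < β) (hβ : β < 0) (hγ : 0 ≤ γ)
    (hαγ : γ < -(1 / α)) (hε0 : 0 ≤ ε) (hε1 : ε ≤ 1) :
    Cfun α β γ ε ≤ ((ε + 1) / 2) ^ (1 / α) := by
  have hα : α < 0 := hαβ.trans hβ
  have hP : (0:ℝ) < 1 + ε := by linarith
  have hγα : (0:ℝ) < γ * α + 1 := by
    have h2 : -(1 / α) * α < γ * α := mul_lt_mul_of_neg_right hαγ hα
    have hne : α ≠ 0 := hα.ne
    rw [neg_mul, one_div, inv_mul_cancel₀ hne] at h2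
    linarith
  have hγβ1 : (0:ℝ) < γ * β + 1 := by nlinarith
  have hγβle : γ * β + 1 ≤ 1 := by nlinarith
  set X : ℝ := ε ^ (γ * β + 1) + 1 with hXdef
  set Y : ℝ := ε ^ (γ * α + 1) + 1 with hYdef
  -- X ≥ 1 + ε
  have hXge : 1 + ε ≤ X := by
    rcases eq_or_lt_of_le hε0 with h0 | h0
    · simp [hXdef, ← h0, Real.zero_rpow hγβ1.ne']
    · have := Real.rpow_le_rpow_of_exponent_ge h0 hε1 hγβle
      rw [Real.rpow_one] at this
      simp only [hXdef]; linarith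
  -- Y ≤ 2
  have hYle : Y ≤ 2 := by
    have := Real.rpow_le_one hε0 hε1 hγα.le
    simp only [hYdef]; linarith
  have hY1 : (0:ℝ) < Y := by
    have := Real.rpow_nonneg hε0 (γ * α + 1); simp only [hYdef]; linarith
  have h1β : 1 / β ≤ 0 := by rw [one_div_nonpos]; exact hβ.le
  have h1α : 1 / α ≤ 0 := by rw [one_div_nonpos]; exact hα.le
  have hXb : X ^ (1 / β) ≤ (1 + ε) ^ (1 / β) :=
    Real.rpow_le_rpow_of_nonpos hP hXge h1β
  have hYb : (2:ℝ) ^ (1 / α) ≤ Y ^ (1 / α) :=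
    Real.rpow_le_rpow_of_nonpos hY1 hYle h1α
  have hPα : (0:ℝ) < (1 + ε) ^ (1 / α) := Real.rpow_pos_of_pos hP _
  have hPβ : (0:ℝ) < (1 + ε) ^ (1 / β) := Real.rpow_pos_of_pos hP _
  have h2α : (0:ℝ) < (2:ℝ) ^ (1 / α) := Real.rpow_pos_of_pos two_pos _
  calc Cfun α β γ ε ≤ ((1 + ε) ^ (1 / β) * (1 + ε) ^ (1 / α)) /
      ((2:ℝ) ^ (1 / α) * (1 + ε) ^ (1 / β)) := by
        unfold Cfun
        apply div_le_div₀ (by positivity)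
          (mul_le_mul_of_nonneg_right hXb hPα.le) (by positivity)
          (mul_le_mul_of_nonneg_right hYb hPβ.le)
  _ = (1 + ε) ^ (1 / α) / (2:ℝ) ^ (1 / α) := by
      rw [mul_comm ((2:ℝ) ^ (1 / α)), mul_div_mul_left _ _ hPβ.ne']
  _ = ((1 + ε) / 2) ^ (1 / α) := (Real.div_rpow hP.le (by norm_num) _).symm
  _ = ((ε + 1) / 2) ^ (1 / α) := by rw [add_comm]

/-- For `α < β < 0`: if `γ < 0` with `αγ > -1` then `C_{α,β,γ}(ε) ≤ (1+ε)^{1/α-1/β}` on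
`[0,1]` (hence `C_{α,β,γ} ≤ 2^{1/α-1/β}`); and if `0 ≤ γ < -1/α` then
`C_{α,β,γ}(ε) ≤ ((ε+1)/2)^{1/α}` on `[0,1]` (hence `C_{α,β,γ} ≤ 2^{-1/α}`). -/
theorem Cfun_bounds_case_neg_neg
    (α β : ℝ) (hαβ : α < β) (hβ : β < 0) :
    (∀ γ : ℝ, γ < 0 → α * γ > -1 →
      (∀ ε ∈ Icc (0 : ℝ) 1, Cfun α β γ ε ≤ (1 + ε) ^ (1 / α - 1 / β)) ∧
        Cmax α β γ ≤ (2 : ℝ) ^ (1 / α - 1 / β)) ∧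
    (∀ γ : ℝ, 0 ≤ γ → γ < -(1 / α) →
      (∀ ε ∈ Icc (0 : ℝ) 1, Cfun α β γ ε ≤ ((ε + 1) / 2) ^ (1 / α)) ∧
        Cmax α β γ ≤ (2 : ℝ) ^ (-(1 / α))) := by
  have hα : α < 0 := hαβ.trans hβ
  constructor
  · intro γ hγ hαγ
    have hmono : ∀ ε ∈ Icc (0 : ℝ) 1, Cfun α β γ ε ≤ (1 + ε) ^ (1 / α - 1 / β) := by
      intro ε hε
      exact ptwise1 α β γ ε hαβ hβ hγ (by nlinarith [hαγ]) hε.1 hε.2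
    refine ⟨hmono, ?_⟩
    apply Real.sSup_le
    · rintro x ⟨ε, hε, rfl⟩
      refine (hmono ε hε).trans ?_
      apply Real.rpow_le_rpow (by linarith [hε.1]) (by linarith [hε.2])
      have : 1 / β ≤ 1 / α := one_div_le_one_div_of_neg_of_le hβ hαβ.le
      linarith
    · positivity
  · intro γ hγ hαγ
    have hmono : ∀ ε ∈ Icc (0 : ℝ) 1, Cfun α β γ ε ≤ ((ε + 1) / 2) ^ (1 / α) := by
      intro ε hε
      exact ptwise2 α β γ ε hαβ hβ hγ hαγ hε.1 hε.2
    refine ⟨hmono, ?_⟩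
    apply Real.sSup_le
    · rintro x ⟨ε, hε, rfl⟩
      refine (hmono ε hε).trans ?_
      have h2 : ((2:ℝ)) ^ (-(1 / α)) = ((1:ℝ)/2) ^ (1 / α) := by
        rw [Real.rpow_neg (by norm_num : (0:ℝ) ≤ 2),
          ← Real.inv_rpow (by norm_num : (0:ℝ) ≤ 2)]
        norm_num
      rw [h2]
      exact Real.rpow_le_rpow_of_nonpos (by norm_num) (by linarith [hε.1])
        (by rw [one_div_nonpos]; exact hα.le)
    · positivity
end

section
/- Let α < β < 0 and define C_{α,β} = sup over γ ∈ (−∞, −1/α) of C_{α,β,γ}. Then C_{α,β} = 2^{1/α − 1/β} if α ≤ 2β, and C_{α,β} = 2^{−1/α} if 2β < α < β. -/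
open Set

/-!
Write `X = ε^{γα+1} + 1`, `Y = ε^{γβ+1} + 1` and `Z = 1 + ε`, all in `[1, 2]`, so that
`C_{α,β,γ}(ε) = (Y^{1/β} / X^{1/α}) (Z^{1/α} / Z^{1/β}) = (Y^{1/β} / Z^{1/β}) (Z^{1/α} / X^{1/α})`.
For `γ ≤ 0` we have `Y ≥ X`, so the first factorisation is at most `2^{1/α-1/β}`; for `γ ≥ 0` we
have `Y ≥ Z`, so the second is at most `2^{-1/α}`. Both bounds are approached: the first as
`γ → -∞` and then `ε → 1`, the second as `γ → -1/α` and then `ε → 0`, where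
`C_{α,β,-1/α}(0) = 2^{-1/α}` because `ε^0 = 1`. The larger of the two is decided by the sign of
`α - 2β`.
-/

open Real Filter Topology

section
variable {α β γ ε : ℝ}

lemma Cfun_le_of_nonpos (hαβ : α < β) (hβ : β < 0) (hγ : γ ≤ 0) (hε : ε ∈ Icc (0 : ℝ) 1) :
    Cfun α β γ ε ≤ 2 ^ (1 / α - 1 / β) := by
  obtain ⟨hε0, hε1⟩ := hε
  have hX : 1 ≤ ε ^ (γ * α + 1) + 1 := le_add_of_nonneg_left (rpow_nonneg hε0 _)
  have hXY : ε ^ (γ * α + 1) ≤ ε ^ (γ * β + 1) :=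
    rpow_le_rpow_of_exponent_ge' hε0 hε1 (by nlinarith) (by nlinarith)
  have hYX : (ε ^ (γ * β + 1) + 1) ^ (1 / β) / (ε ^ (γ * α + 1) + 1) ^ (1 / α) ≤ 1 := by
    rw [div_le_one (by positivity)]
    calc (ε ^ (γ * β + 1) + 1) ^ (1 / β)
        ≤ (ε ^ (γ * α + 1) + 1) ^ (1 / β) :=
          rpow_le_rpow_of_nonpos (by positivity) (by linarith) (one_div_neg.2 hβ).le
      _ ≤ (ε ^ (γ * α + 1) + 1) ^ (1 / α) :=
          rpow_le_rpow_of_exponent_le hX (one_div_le_one_div_of_neg_of_le hβ hαβ.le)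
  have hZ : (1 + ε) ^ (1 / α) / (1 + ε) ^ (1 / β) ≤ 2 ^ (1 / α - 1 / β) := by
    rw [← rpow_sub (by linarith)]
    exact rpow_le_rpow (by linarith) (by linarith)
      (sub_nonneg.2 (one_div_le_one_div_of_neg_of_le hβ hαβ.le))
  calc Cfun α β γ ε
      = (ε ^ (γ * β + 1) + 1) ^ (1 / β) / (ε ^ (γ * α + 1) + 1) ^ (1 / α) *
          ((1 + ε) ^ (1 / α) / (1 + ε) ^ (1 / β)) := by unfold Cfun; ring
    _ ≤ 2 ^ (1 / α - 1 / β) := (mul_le_of_le_one_left (by positivity) hYX).trans hZ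

lemma Cfun_le_of_nonneg (hαβ : α < β) (hβ : β < 0) (hγ₀ : 0 ≤ γ) (hγ : γ ≤ -(1 / α))
    (hε : ε ∈ Icc (0 : ℝ) 1) :
    Cfun α β γ ε ≤ 2 ^ (-(1 / α)) := by
  obtain ⟨hε0, hε1⟩ := hε
  have hα : α < 0 := hαβ.trans hβ
  have hγα : -1 ≤ γ * α := by
    simpa [hα.ne] using mul_le_mul_of_nonpos_right hγ hα.le
  have hZY : 1 + ε ≤ ε ^ (γ * β + 1) + 1 := by
    have : ε ^ (1 : ℝ) ≤ ε ^ (γ * β + 1) :=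
      rpow_le_rpow_of_exponent_ge' hε0 hε1 (by nlinarith) (by nlinarith)
    rw [rpow_one] at this
    linarith
  have hYZ : (ε ^ (γ * β + 1) + 1) ^ (1 / β) / (1 + ε) ^ (1 / β) ≤ 1 := by
    rw [div_le_one (by positivity)]
    exact rpow_le_rpow_of_nonpos (by positivity) hZY (one_div_neg.2 hβ).le
  have hZX : (1 + ε) ^ (1 / α) / (ε ^ (γ * α + 1) + 1) ^ (1 / α) ≤ 2 ^ (-(1 / α)) := by
    rw [rpow_neg zero_le_two, inv_eq_one_div]
    refine div_le_div₀ zero_le_one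
      (rpow_le_one_of_one_le_of_nonpos (by linarith) (one_div_neg.2 hα).le) (by positivity)
      (rpow_le_rpow_of_nonpos (by positivity) ?_ (one_div_neg.2 hα).le)
    have : ε ^ (γ * α + 1) ≤ 1 := rpow_le_one hε0 hε1 (by linarith)
    linarith
  calc Cfun α β γ ε
      = (ε ^ (γ * β + 1) + 1) ^ (1 / β) / (1 + ε) ^ (1 / β) *
          ((1 + ε) ^ (1 / α) / (ε ^ (γ * α + 1) + 1) ^ (1 / α)) := by unfold Cfun; ring
    _ ≤ 2 ^ (-(1 / α)) := (mul_le_of_le_one_left (by positivity) hYZ).trans hZX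

lemma Cfun_le_max (hαβ : α < β) (hβ : β < 0) (hγ : γ ≤ -(1 / α)) (hε : ε ∈ Icc (0 : ℝ) 1) :
    Cfun α β γ ε ≤ max (2 ^ (1 / α - 1 / β)) (2 ^ (-(1 / α))) := by
  rcases le_total γ 0 with hγ₀ | hγ₀
  · exact le_max_of_le_left (Cfun_le_of_nonpos hαβ hβ hγ₀ hε)
  · exact le_max_of_le_right (Cfun_le_of_nonneg hαβ hβ hγ₀ hγ hε)

lemma bddAbove_image_Cfun (hαβ : α < β) (hβ : β < 0) (hγ : γ ≤ -(1 / α)) :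
    BddAbove (Cfun α β γ '' Icc 0 1) :=
  ⟨_, forall_mem_image.2 fun _ hε => Cfun_le_max hαβ hβ hγ hε⟩

lemma Cmax_le_max (hαβ : α < β) (hβ : β < 0) (hγ : γ ≤ -(1 / α)) :
    Cmax α β γ ≤ max (2 ^ (1 / α - 1 / β)) (2 ^ (-(1 / α))) :=
  csSup_le ((nonempty_Icc.2 zero_le_one).image _)
    (forall_mem_image.2 fun _ hε => Cfun_le_max hαβ hβ hγ hε)

lemma continuous_Cfun_gamma (hε : 0 < ε) : Continuous fun γ => Cfun α β γ ε := by
  have hbase : ∀ c d : ℝ, Continuous fun γ : ℝ => (ε ^ (γ * c + 1) + 1) ^ d := fun c d =>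
    ((continuous_const.rpow (by fun_prop) fun _ => Or.inl hε.ne').add
      continuous_const).rpow_const fun _ => Or.inl (add_pos (rpow_pos_of_pos hε _) one_pos).ne'
  exact ((hbase β _).mul continuous_const).div ((hbase α _).mul continuous_const)
    fun _ => by positivity

lemma tendsto_rpow_mul_add_one_atBot {c : ℝ} (hc : c < 0) (hε0 : 0 < ε) (hε1 : ε < 1) :
    Tendsto (fun γ => ε ^ (γ * c + 1)) atBot (𝓝 0) :=
  (tendsto_rpow_atTop_of_base_lt_one ε (by linarith) hε1).comp
    (tendsto_atTop_add_const_right _ 1 (tendsto_id.atBot_mul_const_of_neg hc))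

lemma tendsto_Cfun_atBot (hα : α < 0) (hβ : β < 0) (hε0 : 0 < ε) (hε1 : ε < 1) :
    Tendsto (fun γ => Cfun α β γ ε) atBot (𝓝 ((1 + ε) ^ (1 / α - 1 / β))) := by
  have hbase : ∀ {c : ℝ} (d : ℝ), c < 0 →
      Tendsto (fun γ => (ε ^ (γ * c + 1) + 1) ^ d) atBot (𝓝 1) := fun d hc => by
    simpa using ((tendsto_rpow_mul_add_one_atBot hc hε0 hε1).add_const 1).rpow_const
      (Or.inl (by norm_num)) (p := d)
  have hlim := ((hbase (1 / β) hβ).mul_const ((1 + ε) ^ (1 / α))).div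
    ((hbase (1 / α) hα).mul_const ((1 + ε) ^ (1 / β))) (by positivity)
  rwa [one_mul, one_mul, ← rpow_sub (by linarith)] at hlim

lemma tendsto_Cfun_neg_inv_nhdsGT_zero (hαβ : α < β) (hβ : β < 0) :
    Tendsto (Cfun α β (-(1 / α))) (𝓝[>] 0) (𝓝 (2 ^ (-(1 / α)))) := by
  have hα : α < 0 := hαβ.trans hβ
  have hexp : 0 < -(1 / α) * β + 1 := by
    have : β / α < 1 := (div_lt_one_of_neg hα).2 hαβ
    field_simp
    linarith
  have h0 : -(1 / α) * α + 1 = 0 := by rw [neg_mul, one_div, inv_mul_cancel₀ hα.ne]; ring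
  have hcont : ContinuousAt (Cfun α β (-(1 / α))) 0 := by
    unfold Cfun
    simp only [h0, rpow_zero]
    refine ContinuousAt.div (ContinuousAt.mul ?_ ?_) (continuousAt_const.mul ?_) (by positivity)
    · exact ((continuousAt_id.rpow_const (Or.inr hexp.le)).add continuousAt_const).rpow_const
        (Or.inl (add_pos_of_nonneg_of_pos (rpow_nonneg le_rfl _) one_pos).ne')
    all_goals exact (continuousAt_const.add continuousAt_id).rpow_const (Or.inl (by norm_num))
  have hval : Cfun α β (-(1 / α)) 0 = 2 ^ (-(1 / α)) := by
    rw [Cfun, h0, rpow_zero, zero_rpow hexp.ne', rpow_neg zero_le_two]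
    norm_num
  exact hval ▸ hcont.tendsto.mono_left nhdsWithin_le_nhds

lemma two_rpow_inv_sub_inv_le_of_Cfun_le {s : ℝ} (hα : α < 0) (hβ : β < 0)
    (h : ∀ γ < -(1 / α), ∀ ε ∈ Ioo (0 : ℝ) 1, Cfun α β γ ε ≤ s) :
    (2 : ℝ) ^ (1 / α - 1 / β) ≤ s := by
  have hε : ∀ ε ∈ Ioo (0 : ℝ) 1, (1 + ε) ^ (1 / α - 1 / β) ≤ s := fun ε hε =>
    le_of_tendsto (tendsto_Cfun_atBot hα hβ hε.1 hε.2)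
      ((eventually_lt_atBot _).mono fun γ hγ => h γ hγ ε hε)
  have hlim : Tendsto (fun ε : ℝ => (1 + ε) ^ (1 / α - 1 / β)) (𝓝[<] 1)
      (𝓝 ((2 : ℝ) ^ (1 / α - 1 / β))) := by
    have hcont : ContinuousAt (fun ε : ℝ => (1 + ε) ^ (1 / α - 1 / β)) 1 :=
      (continuousAt_const.add continuousAt_id).rpow_const (Or.inl (by norm_num))
    simpa [one_add_one_eq_two] using hcont.tendsto.mono_left nhdsWithin_le_nhds
  exact le_of_tendsto hlim (mem_of_superset (Ioo_mem_nhdsLT zero_lt_one) hε)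

lemma two_rpow_neg_inv_le_of_Cfun_le {s : ℝ} (hαβ : α < β) (hβ : β < 0)
    (h : ∀ γ < -(1 / α), ∀ ε ∈ Ioo (0 : ℝ) 1, Cfun α β γ ε ≤ s) :
    (2 : ℝ) ^ (-(1 / α)) ≤ s := by
  have hε : ∀ ε ∈ Ioo (0 : ℝ) 1, Cfun α β (-(1 / α)) ε ≤ s := fun ε hε =>
    le_of_tendsto (x := 𝓝[<] (-(1 / α)))
      ((continuous_Cfun_gamma hε.1).tendsto _ |>.mono_left nhdsWithin_le_nhds)
      (eventually_nhdsWithin_of_forall fun γ hγ => h γ hγ ε hε)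
  exact le_of_tendsto (tendsto_Cfun_neg_inv_nhdsGT_zero hαβ hβ)
    (mem_of_superset (Ioo_mem_nhdsGT zero_lt_one) hε)

lemma sSup_Cmax_eq_max (hαβ : α < β) (hβ : β < 0) :
    sSup {c | ∃ γ : ℝ, γ < -(1 / α) ∧ c = Cmax α β γ} =
      max (2 ^ (1 / α - 1 / β)) (2 ^ (-(1 / α))) := by
  have hα : α < 0 := hαβ.trans hβ
  refine IsLUB.csSup_eq ⟨?_, fun s hs => ?_⟩ ⟨_, -(1 / α) - 1, by linarith, rfl⟩
  · rintro _ ⟨γ, hγ, rfl⟩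
    exact Cmax_le_max hαβ hβ hγ.le
  · have h : ∀ γ < -(1 / α), ∀ ε ∈ Ioo (0 : ℝ) 1, Cfun α β γ ε ≤ s := fun γ hγ ε hε =>
      (le_csSup (bddAbove_image_Cfun hαβ hβ hγ.le)
        (mem_image_of_mem _ (Ioo_subset_Icc_self hε))).trans (hs ⟨γ, hγ, rfl⟩)
    exact max_le (two_rpow_inv_sub_inv_le_of_Cfun_le hα hβ h)
      (two_rpow_neg_inv_le_of_Cfun_le hαβ hβ h)

lemma neg_inv_le_inv_sub_inv_iff (hα : α < 0) (hβ : β < 0) :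
    -(1 / α) ≤ 1 / α - 1 / β ↔ α ≤ 2 * β := by
  rw [← sub_nonneg, show 1 / α - 1 / β - -(1 / α) = (2 * β - α) / (α * β) by
      field_simp [hα.ne, hβ.ne]; ring,
    le_div_iff₀ (mul_pos_of_neg_of_neg hα hβ), zero_mul, sub_nonneg]

end

/-- For `α < β < 0`, the constant `C_{α,β} = sup_{γ ∈ (-∞,-1/α)} C_{α,β,γ}` equals
`2^{1/α-1/β}` when `α ≤ 2β`, and `2^{-1/α}` when `2β < α < β`. -/
theorem Cab_case_neg_neg
    (α β : ℝ) (hαβ : α < β) (hβ : β < 0) :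
    (α ≤ 2 * β →
      sSup {c | ∃ γ : ℝ, γ < -(1 / α) ∧ c = Cmax α β γ} = (2 : ℝ) ^ (1 / α - 1 / β)) ∧
    (2 * β < α →
      sSup {c | ∃ γ : ℝ, γ < -(1 / α) ∧ c = Cmax α β γ} = (2 : ℝ) ^ (-(1 / α))) := by
  have hα : α < 0 := hαβ.trans hβ
  have hexp := neg_inv_le_inv_sub_inv_iff hα hβ
  rw [sSup_Cmax_eq_max hαβ hβ]
  refine ⟨fun h => max_eq_left ?_, fun h => max_eq_right ?_⟩
  · exact rpow_le_rpow_of_exponent_le one_le_two (hexp.2 h)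
  · exact rpow_le_rpow_of_exponent_le one_le_two (not_le.1 (mt hexp.1 (not_le.2 h))).le
end
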